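/- arXiv:1303.1676 — 10 statements merged into one kernel-verified Lean document; each statement's English description precedes it below -/
import Mathlib

section
/- Let p be a prime, let G be a cyclic group of order p, and let S be a minimal zero-sum sequence over G of length 5. If h(S) ≥ 3, then ind(S) = 1. -/
open Classical in
/-- The canonical coefficient of `x` with respect to `g`: the least positive `k` with
`k • g = x` (or `0` if no such `k` exists). If `g` generates a group of order `n`,
this is the unique `k ∈ [1, n]` with `k • g = x`. -/
noncomputable def coeff {G : Type*} [AddCommGroup G] (g x : G) : ℕ :=
  if h : ∃ k : ℕ, 0 < k ∧ k • g = x then Nat.find h else 0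

/-- `‖S‖_g = (n₁ + ⋯ + n_l) / n` where `S = (n₁ g) ⋯ (n_l g)`, `n_i ∈ [1, n]`. -/
noncomputable def seqNorm {G : Type*} [AddCommGroup G] [Fintype G] (g : G) (S : Multiset G) : ℝ :=
  ((S.map (coeff g)).sum : ℝ) / (Fintype.card G : ℝ)

/-- The index of a sequence `S`: the minimum of `‖S‖_g` over all generators `g` of `G`. -/
noncomputable def seqIndex {G : Type*} [AddCommGroup G] [Fintype G] (S : Multiset G) : ℝ :=
  sInf ((fun g => seqNorm g S) '' {g : G | AddSubgroup.zmultiples g = ⊤})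

/-- A minimal zero-sum sequence: a nonempty zero-sum sequence none of whose proper
nonempty subsequences has sum zero. -/
def IsMinZeroSum {G : Type*} [AddCommGroup G] (S : Multiset G) : Prop :=
  S ≠ 0 ∧ S.sum = 0 ∧ ∀ T : Multiset G, T ≤ S → T ≠ 0 → T ≠ S → T.sum ≠ 0

open Classical in
lemma coeff_spec {G : Type*} [AddCommGroup G] {g x : G}
    (h : ∃ k : ℕ, 0 < k ∧ k • g = x) : 0 < coeff g x ∧ (coeff g x) • g = x := by
  rw [coeff, dif_pos h]
  exact Nat.find_spec h

open Classical in
lemma coeff_le {G : Type*} [AddCommGroup G] {g x : G} {k : ℕ}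
    (hk : 0 < k) (hkx : k • g = x) : coeff g x ≤ k := by
  rw [coeff, dif_pos ⟨k, hk, hkx⟩]
  exact Nat.find_le ⟨hk, hkx⟩

lemma exists_pos_smul_eq {G : Type*} [AddCommGroup G] {g : G}
    (hg : AddSubgroup.zmultiples g = ⊤) (hn : 0 < addOrderOf g) (x : G) :
    ∃ k : ℕ, 0 < k ∧ k ≤ addOrderOf g ∧ k • g = x := by
  have hx : x ∈ AddSubgroup.zmultiples g := hg ▸ AddSubgroup.mem_top x
  obtain ⟨m, hm⟩ := AddSubgroup.mem_zmultiples_iff.mp hx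
  set n := addOrderOf g with hndef
  have hn0 : (n : ℤ) ≠ 0 := by exact_mod_cast hn.ne'
  have h0 : ((n : ℤ)) • g = 0 := by
    rw [natCast_zsmul]; exact addOrderOf_nsmul_eq_zero g
  have hmod : (m % (n : ℤ)) • g = x := by
    conv_rhs => rw [← hm, ← Int.emod_add_mul_ediv m (n : ℤ)]
    rw [add_zsmul, mul_comm, mul_zsmul, h0, smul_zero, add_zero]
  have key : ((m % (n : ℤ)).toNat : ℤ) = m % (n : ℤ) :=
    Int.toNat_of_nonneg (Int.emod_nonneg m hn0)
  set k := (m % (n : ℤ)).toNat with hkdef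
  have hk : k • g = x := by
    have : ((k : ℤ)) • g = x := by rw [key]; exact hmod
    rwa [natCast_zsmul] at this
  have hklt : k < n := by
    have := Int.emod_lt_of_pos m (b := (n : ℤ)) (by exact_mod_cast hn)
    omega
  rcases Nat.eq_zero_or_pos k with hk0 | hkpos
  · refine ⟨n, hn, le_refl n, ?_⟩
    rw [hk0, zero_smul] at hk
    rw [← hk]
    exact addOrderOf_nsmul_eq_zero g
  · exact ⟨k, hkpos, hklt.le, hk⟩

lemma map_coeff_sum_smul {G : Type*} [AddCommGroup G] (g : G) (S : Multiset G)
    (hall : ∀ s ∈ S, (coeff g s) • g = s) :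
    ((S.map (coeff g)).sum) • g = S.sum := by
  induction S using Multiset.induction_on with
  | empty => simp
  | cons a s ih =>
    simp only [Multiset.map_cons, Multiset.sum_cons, add_nsmul]
    rw [hall a (Multiset.mem_cons_self a s),
      ih (fun t ht => hall t (Multiset.mem_cons_of_mem ht))]

/-- For a prime `p` and a cyclic group `G` of order `p`, every minimal zero-sum
sequence `S` of length 5 with `h(S) ≥ 3` has `ind(S) = 1`. -/
theorem stmt1 (p : ℕ) (hp : p.Prime)
    (G : Type*) [AddCommGroup G] [Fintype G] [DecidableEq G]
    (hcyc : IsAddCyclic G) (hcard : Fintype.card G = p)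
    (S : Multiset G) (hlen : Multiset.card S = 5)
    (hmin : IsMinZeroSum S) (hh : ∃ x : G, 3 ≤ S.count x) :
    seqIndex S = 1 := by
  classical
  obtain ⟨x, hx3⟩ := hh
  have hp2 : 2 ≤ p := hp.two_le
  have hppos : 0 < p := by omega
  -- every element of S is nonzero
  have hnz : ∀ s ∈ S, s ≠ 0 := by
    intro s hs h0
    refine hmin.2.2 {s} (Multiset.singleton_le.mpr hs) (by simp) ?_ (by simp [h0])
    intro h
    apply_fun Multiset.card at h
    simp [hlen] at h
  have hxS : x ∈ S := Multiset.count_pos.mp (by omega)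
  have hx0 : x ≠ 0 := hnz x hxS
  -- order facts
  have horder : ∀ g : G, AddSubgroup.zmultiples g = ⊤ → addOrderOf g = p := by
    intro g hg
    have h1 : addOrderOf g ∣ p := hcard ▸ addOrderOf_dvd_card
    rcases hp.eq_one_or_self_of_dvd _ h1 with h | h
    · exfalso
      have hg0 : g = 0 := AddMonoid.addOrderOf_eq_one_iff.mp h
      have hall : ∀ y : G, y = 0 := by
        intro y
        have hy : y ∈ AddSubgroup.zmultiples g := hg ▸ AddSubgroup.mem_top y
        obtain ⟨m, hm⟩ := AddSubgroup.mem_zmultiples_iff.mp hy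
        rw [← hm, hg0, smul_zero]
      have : Fintype.card G ≤ 1 := Fintype.card_le_one_iff.mpr (fun a b => by
        rw [hall a, hall b])
      omega
    · exact h
  have hgen : ∀ g : G, g ≠ 0 → AddSubgroup.zmultiples g = ⊤ := by
    intro g hg
    have h1 : addOrderOf g ∣ p := hcard ▸ addOrderOf_dvd_card
    have h2 : addOrderOf g ≠ 1 := by
      simpa [AddMonoid.addOrderOf_eq_one_iff] using hg
    have h3 : addOrderOf g = p := (hp.eq_one_or_self_of_dvd _ h1).resolve_left h2
    apply AddSubgroup.eq_top_of_card_eq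
    rw [Nat.card_zmultiples, h3, Nat.card_eq_fintype_card, hcard]
  -- general facts for an arbitrary generator g
  have hfacts : ∀ g : G, AddSubgroup.zmultiples g = ⊤ →
      (∀ s ∈ S, 0 < coeff g s ∧ coeff g s ≤ p ∧ (coeff g s) • g = s) ∧
      p ∣ (S.map (coeff g)).sum ∧ p ≤ (S.map (coeff g)).sum := by
    intro g hg
    have hog : addOrderOf g = p := horder g hg
    have hogpos : 0 < addOrderOf g := by omega
    have helt : ∀ s ∈ S, 0 < coeff g s ∧ coeff g s ≤ p ∧ (coeff g s) • g = s := by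
      intro s _
      obtain ⟨k, hk1, hk2, hk3⟩ := exists_pos_smul_eq hg hogpos s
      obtain ⟨c1, c2⟩ := coeff_spec ⟨k, hk1, hk3⟩
      exact ⟨c1, (coeff_le hk1 hk3).trans (by omega), c2⟩
    have hsmul : ((S.map (coeff g)).sum) • g = 0 := by
      rw [map_coeff_sum_smul g S (fun s hs => (helt s hs).2.2), hmin.2.1]
    have hdvd : p ∣ (S.map (coeff g)).sum := by
      rw [← hog]; exact addOrderOf_dvd_of_nsmul_eq_zero hsmul
    have h5 : 5 ≤ (S.map (coeff g)).sum := by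
      have := Multiset.card_nsmul_le_sum (s := S.map (coeff g)) (a := 1)
        (fun y hy => by
          obtain ⟨s, hs, rfl⟩ := Multiset.mem_map.mp hy
          exact (helt s hs).1)
      simpa [hlen] using this
    exact ⟨helt, hdvd, Nat.le_of_dvd (by omega) hdvd⟩
  -- norms of generators are ≥ 1
  have hlb : ∀ y ∈ (fun g => seqNorm g S) '' {g : G | AddSubgroup.zmultiples g = ⊤},
      1 ≤ y := by
    rintro y ⟨g, hg, rfl⟩
    obtain ⟨-, -, hple⟩ := hfacts g hg
    simp only [seqNorm]
    rw [hcard, le_div_iff₀ (by exact_mod_cast hppos)]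
    rw [one_mul]
    exact_mod_cast hple
  -- the generator x has norm exactly 1
  have hogx : addOrderOf x = p := horder x (hgen x hx0)
  have hxgen : AddSubgroup.zmultiples x = ⊤ := hgen x hx0
  obtain ⟨helt, hdvd, hple⟩ := hfacts x hxgen
  have hcxx : coeff x x = 1 := by
    have h1 : coeff x x ≤ 1 := coeff_le (k := 1) one_pos (one_smul _ _)
    have h2 := (helt x hxS).1
    omega
  -- decompose S = replicate 3 x + {a, b}
  have hrep : Multiset.replicate 3 x ≤ S := Multiset.le_count_iff_replicate_le.mp hx3
  obtain ⟨R, hR⟩ := Multiset.le_iff_exists_add.mp hrep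
  have hRcard : Multiset.card R = 2 := by
    have := hlen
    rw [hR] at this
    simp at this
    omega
  obtain ⟨a, b, hab⟩ := Multiset.card_eq_two.mp hRcard
  -- key bound: coefficients of elements of S (w.r.t. x) are ≤ p - 2
  have hboundall : ∀ s ∈ S, coeff x s ≤ p - 2 := by
    intro s hs
    obtain ⟨hc1, hc2, hc3⟩ := helt s hs
    have hnep : coeff x s ≠ p := by
      intro h
      apply hnz s hs
      rw [← hc3, h, ← hogx]
      exact addOrderOf_nsmul_eq_zero x
    have hnep1 : coeff x s ≠ p - 1 := by
      intro h
      -- the subsequence {x, s} sums to zero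
      have hT : ({x} + {s} : Multiset G) ≤ S := by
        rw [Multiset.le_iff_count]
        intro y
        have hcs : 0 < S.count s := Multiset.count_pos.mpr hs
        rw [Multiset.count_add]
        rcases eq_or_ne y x with rfl | h1
        · rcases eq_or_ne y s with h2 | h2
          · rw [← h2]; simp; omega
          · simp [h2]; omega
        · rcases eq_or_ne y s with rfl | h2
          · simp [h1]; omega
          · simp [h1, h2]
      refine hmin.2.2 ({x} + {s}) hT (by simp) ?_ ?_
      · intro h'
        apply_fun Multiset.card at h'
        simp [hlen] at h'
      · have : ({x} + {s} : Multiset G).sum = x + s := by simp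
        rw [this, ← hc3, h]
        have : x + (p - 1) • x = p • x := by
          have hp1 : p - 1 + 1 = p := by omega
          rw [add_comm, ← succ_nsmul, hp1]
        rw [this, ← hogx]
        exact addOrderOf_nsmul_eq_zero x
    omega
  -- compute the coefficient sum for x
  have hsum_eq : (S.map (coeff x)).sum = 3 * coeff x x + (coeff x a + coeff x b) := by
    rw [hR, hab]
    simp [Multiset.map_replicate, Multiset.sum_replicate]
    ring
  have haS : a ∈ S := by rw [hR, hab]; simp
  have hbS : b ∈ S := by rw [hR, hab]; simp
  have hub : (S.map (coeff x)).sum ≤ 2 * p - 1 := by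
    have h1 := hboundall a haS
    have h2 := hboundall b hbS
    rw [hsum_eq, hcxx]
    omega
  have hsump : (S.map (coeff x)).sum = p := by
    obtain ⟨c, hc⟩ := hdvd
    have hc1 : 1 ≤ c := by
      rcases Nat.eq_zero_or_pos c with h | h
      · rw [h, mul_zero] at hc; omega
      · omega
    have hc2 : c < 2 := by
      by_contra h
      push_neg at h
      have : p * 2 ≤ p * c := Nat.mul_le_mul_left p h
      omega
    have : c = 1 := by omega
    rw [hc, this, mul_one]
  have hnormx : seqNorm x S = 1 := by
    simp only [seqNorm]
    rw [hcard, hsump, div_self (by exact_mod_cast hppos.ne')]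
  have hmem : (1 : ℝ) ∈ (fun g => seqNorm g S) '' {g : G | AddSubgroup.zmultiples g = ⊤} :=
    ⟨x, hxgen, hnormx⟩
  rw [seqIndex]
  exact le_antisymm (csInf_le ⟨1, hlb⟩ hmem) (le_csInf ⟨1, hmem⟩ hlb)
end

section
/- Let p be a prime with 5 ≤ p ≤ 59, let G = ⟨g⟩ be a cyclic group of order p, and let S = g·g·(x₁g)·(x₂g)·(x₃g) be a minimal zero-sum sequence over G, where 2 ≤ x₁ ≤ x₂ ≤ x₃ ≤ p−3. Then ind(S) = 2 if and only if one of the following holds: (1) x₁ = (p−1)/2, x₂ = (p+3)/2, x₃ = p−3; (2) p = 17 and (x₁,x₂,x₃) = (8,11,13); (3) p = 19 and (x₁,x₂,x₃) = (6,14,16); (4) p = 19 and (x₁,x₂,x₃) = (9,12,15); (5) p = 23 and (x₁,x₂,x₃) = (11,15,18); (6) p = 23 and (x₁,x₂,x₃) = (9,15,20); (7) p = 29 and (x₁,x₂,x₃) = (14,19,23). -/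
/-! ### Auxiliary decidable arithmetic -/

def natCoeff (p m : ℕ) : ℕ := if m % p = 0 then p else m % p

def Fval (p x₁ x₂ x₃ v : ℕ) : ℕ :=
  2 * natCoeff p v + natCoeff p (x₁ * v) + natCoeff p (x₂ * v) + natCoeff p (x₃ * v)

def OKp (p x₁ x₂ x₃ : ℕ) : Prop :=
  (∃ v, v < p ∧ 0 < v ∧ Fval p x₁ x₂ x₃ v = 2 * p) ∧
  ∀ v, v < p → 0 < v → 2 * p ≤ Fval p x₁ x₂ x₃ v

instance (p x₁ x₂ x₃ : ℕ) : Decidable (OKp p x₁ x₂ x₃) := by unfold OKp; infer_instance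

def RHSP (p x₁ x₂ x₃ : ℕ) : Prop :=
  (x₁ = (p - 1) / 2 ∧ x₂ = (p + 3) / 2 ∧ x₃ = p - 3) ∨
  (p = 17 ∧ x₁ = 8 ∧ x₂ = 11 ∧ x₃ = 13) ∨
  (p = 19 ∧ x₁ = 6 ∧ x₂ = 14 ∧ x₃ = 16) ∨
  (p = 19 ∧ x₁ = 9 ∧ x₂ = 12 ∧ x₃ = 15) ∨
  (p = 23 ∧ x₁ = 11 ∧ x₂ = 15 ∧ x₃ = 18) ∨
  (p = 23 ∧ x₁ = 9 ∧ x₂ = 15 ∧ x₃ = 20) ∨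
  (p = 29 ∧ x₁ = 14 ∧ x₂ = 19 ∧ x₃ = 23)

instance (p x₁ x₂ x₃ : ℕ) : Decidable (RHSP p x₁ x₂ x₃) := by unfold RHSP; infer_instance

def Gimp (p x₁ x₂ x₃ : ℕ) : Prop :=
  2 ≤ x₁ → x₁ ≤ x₂ → x₂ ≤ x₃ → x₃ ≤ p - 3 → (OKp p x₁ x₂ x₃ ↔ RHSP p x₁ x₂ x₃)

instance (p x₁ x₂ x₃ : ℕ) : Decidable (Gimp p x₁ x₂ x₃) := by unfold Gimp; infer_instance

def KeyP (p : ℕ) : Prop := ∀ x₁ < p, ∀ x₂ < p,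
  Gimp p x₁ x₂ (p - 2 - x₁ - x₂) ∧ Gimp p x₁ x₂ (2 * p - 2 - x₁ - x₂)

set_option synthInstance.maxSize 4000 in
instance (p : ℕ) : Decidable (KeyP p) := by unfold KeyP; infer_instance

lemma key_apply (p : ℕ) (hK : KeyP p) (h5 : 5 ≤ p) (x₁ x₂ x₃ : ℕ)
    (h1 : 2 ≤ x₁) (h12 : x₁ ≤ x₂) (h23 : x₂ ≤ x₃) (h3 : x₃ ≤ p - 3)
    (hmod : (2 + x₁ + x₂ + x₃) % p = 0) : OKp p x₁ x₂ x₃ ↔ RHSP p x₁ x₂ x₃ := by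
  obtain ⟨c, hc⟩ := Nat.dvd_of_mod_eq_zero hmod
  have hx₁ : x₁ < p := by omega
  have hx₂ : x₂ < p := by omega
  have hx₃ : x₃ = p - 2 - x₁ - x₂ ∨ x₃ = 2 * p - 2 - x₁ - x₂ := by
    rcases Nat.lt_or_ge c 3 with h3c | h3c
    · interval_cases c <;> omega
    · exfalso
      have h3p : p * 3 ≤ p * c := Nat.mul_le_mul_left _ h3c
      omega
  rcases hx₃ with h | h <;> rw [h] at h23 h3 ⊢
  · exact (hK x₁ hx₁ x₂ hx₂).1 h1 h12 h23 h3
  · exact (hK x₁ hx₁ x₂ hx₂).2 h1 h12 h23 h3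

set_option maxRecDepth 2000000 in
set_option maxHeartbeats 40000000 in
lemma keyP_all (p : ℕ) (hp : p.Prime) (h5 : 5 ≤ p) (h59 : p ≤ 59) : KeyP p := by
  interval_cases p <;> first
    | exact absurd hp (by decide)
    | decide

/-! ### Generic transfer lemmas along an `AddEquiv` -/

section Transfer

variable {A B : Type*} [AddCommGroup A] [AddCommGroup B]

lemma coeff_eq_of {t x : A} {k : ℕ} (hk : 0 < k) (hkt : k • t = x)
    (hmin : ∀ j, 0 < j → j < k → j • t ≠ x) : coeff t x = k := by
  classical
  have h : ∃ m : ℕ, 0 < m ∧ m • t = x := ⟨k, hk, hkt⟩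
  rw [coeff, dif_pos h, Nat.find_eq_iff]
  exact ⟨⟨hk, hkt⟩, fun j hj hc => hmin j hc.1 hj hc.2⟩

lemma coeff_map (e : A ≃+ B) (t x : A) : coeff (e t) (e x) = coeff t x := by
  classical
  have key : ∀ k : ℕ, (0 < k ∧ k • e t = e x) ↔ (0 < k ∧ k • t = x) := by
    intro k
    constructor
    · rintro ⟨hk, h⟩
      exact ⟨hk, e.injective (by rw [map_nsmul, h])⟩
    · rintro ⟨hk, h⟩
      exact ⟨hk, by rw [← map_nsmul, h]⟩
  unfold coeff
  by_cases h : ∃ k : ℕ, 0 < k ∧ k • t = x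
  · have h' : ∃ k : ℕ, 0 < k ∧ k • e t = e x := (exists_congr key).2 h
    rw [dif_pos h', dif_pos h]
    exact le_antisymm (Nat.find_le ((key _).2 (Nat.find_spec h)))
      (Nat.find_le ((key _).1 (Nat.find_spec h')))
  · rw [dif_neg (fun h' => h ((exists_congr key).1 h')), dif_neg h]

lemma seqNorm_map (e : A ≃+ B) [Fintype A] [Fintype B] (t : A) (S : Multiset A) :
    seqNorm (e t) (S.map e) = seqNorm t S := by
  unfold seqNorm
  rw [Fintype.card_congr e.toEquiv.symm, Multiset.map_map]
  have hmc : Multiset.map (coeff (e t) ∘ ⇑e) S = Multiset.map (coeff t) S :=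
    Multiset.map_congr rfl fun x _ => coeff_map e t x
  rw [hmc]

lemma gen_map (e : A ≃+ B) (t : A) :
    AddSubgroup.zmultiples (e t) = ⊤ ↔ AddSubgroup.zmultiples t = ⊤ := by
  rw [AddSubgroup.eq_top_iff', AddSubgroup.eq_top_iff']
  constructor
  · intro h x
    obtain ⟨k, hk⟩ := AddSubgroup.mem_zmultiples_iff.1 (h (e x))
    exact AddSubgroup.mem_zmultiples_iff.2 ⟨k, e.injective (by rw [map_zsmul, hk])⟩
  · intro h y
    obtain ⟨k, hk⟩ := AddSubgroup.mem_zmultiples_iff.1 (h (e.symm y))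
    refine AddSubgroup.mem_zmultiples_iff.2 ⟨k, ?_⟩
    rw [← map_zsmul, hk, e.apply_symm_apply]

lemma seqIndex_map (e : A ≃+ B) [Fintype A] [Fintype B] (S : Multiset A) :
    seqIndex (S.map e) = seqIndex S := by
  unfold seqIndex
  congr 1
  ext r
  simp only [Set.mem_image, Set.mem_setOf_eq]
  constructor
  · rintro ⟨t, ht, rfl⟩
    refine ⟨e.symm t, (gen_map e _).1 (by rwa [e.apply_symm_apply]), ?_⟩
    rw [← seqNorm_map e (e.symm t) S, e.apply_symm_apply]
  · rintro ⟨t, ht, rfl⟩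
    exact ⟨e t, (gen_map e t).2 ht, seqNorm_map e t S⟩

end Transfer

/-! ### Computations in `ZMod p` -/

section ZModComp

variable {p : ℕ} [Fact p.Prime]

lemma zmod_gen_iff (hp5 : 5 ≤ p) (t : ZMod p) :
    AddSubgroup.zmultiples t = ⊤ ↔ t ≠ 0 := by
  haveI : Fact (1 < p) := ⟨by omega⟩
  constructor
  · intro h ht0
    subst ht0
    have h1 : (1 : ZMod p) ∈ AddSubgroup.zmultiples (0 : ZMod p) :=
      h ▸ AddSubgroup.mem_top 1
    obtain ⟨k, hk⟩ := AddSubgroup.mem_zmultiples_iff.1 h1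
    rw [smul_zero] at hk
    exact zero_ne_one hk
  · intro ht
    rw [AddSubgroup.eq_top_iff']
    intro x
    refine AddSubgroup.mem_zmultiples_iff.2 ⟨((x * t⁻¹).val : ℤ), ?_⟩
    rw [natCast_zsmul, nsmul_eq_mul, ZMod.natCast_val, ZMod.cast_id, mul_assoc,
      inv_mul_cancel₀ ht, mul_one]

lemma coeff_zmod (hp5 : 5 ≤ p) (t : ZMod p) (ht : t ≠ 0) (x : ℕ) :
    coeff t (x : ZMod p) = natCoeff p (x * (t⁻¹).val) := by
  haveI : NeZero p := ⟨by omega⟩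
  have hcast : (((x * (t⁻¹).val : ℕ)) : ZMod p) = (x : ZMod p) * t⁻¹ := by
    push_cast
    rw [ZMod.natCast_val, ZMod.cast_id]
  by_cases hx : (x : ZMod p) = 0
  · have hmod : (x * (t⁻¹).val) % p = 0 := by
      have h0 : (((x * (t⁻¹).val : ℕ)) : ZMod p) = 0 := by rw [hcast, hx, zero_mul]
      rw [ZMod.natCast_eq_zero_iff] at h0
      obtain ⟨c, hc0⟩ := h0
      rw [hc0]
      exact Nat.mul_mod_right p c
    rw [natCoeff, if_pos hmod]
    refine coeff_eq_of (by omega) ?_ ?_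
    · rw [hx, nsmul_eq_mul, ZMod.natCast_self, zero_mul]
    · intro j hj hjp hjt
      rw [hx, nsmul_eq_mul, mul_eq_zero] at hjt
      rcases hjt with h | h
      · rw [ZMod.natCast_eq_zero_iff] at h
        have := Nat.eq_zero_of_dvd_of_lt h hjp
        omega
      · exact ht h
  · have hy : (x : ZMod p) * t⁻¹ ≠ 0 := mul_ne_zero hx (inv_ne_zero ht)
    have hval : (x * (t⁻¹).val) % p = ((x : ZMod p) * t⁻¹).val := by
      rw [← hcast, ZMod.val_natCast]
    have hvne : ((x : ZMod p) * t⁻¹).val ≠ 0 := by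
      rw [Ne, ZMod.val_eq_zero]; exact hy
    rw [natCoeff, if_neg (by omega), hval]
    refine coeff_eq_of (by omega) ?_ ?_
    · rw [nsmul_eq_mul, ZMod.natCast_val, ZMod.cast_id, mul_assoc, inv_mul_cancel₀ ht, mul_one]
    · intro j hj hjlt hjt
      rw [nsmul_eq_mul] at hjt
      have hj' : (j : ZMod p) = (x : ZMod p) * t⁻¹ := by
        rw [← hjt, mul_assoc, mul_inv_cancel₀ ht, mul_one]
      have hjv : j % p = ((x : ZMod p) * t⁻¹).val := by rw [← hj', ZMod.val_natCast]
      have hjp2 : j < p := lt_trans hjlt (ZMod.val_lt _)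
      rw [Nat.mod_eq_of_lt hjp2] at hjv
      omega

end ZModComp

/-! ### The main theorem -/

/-- the classification, for primes `5 ≤ p ≤ 59`, of the minimal zero-sum
sequences `S = g·g·(x₁g)·(x₂g)·(x₃g)` with `2 ≤ x₁ ≤ x₂ ≤ x₃ ≤ p - 3` having `ind(S) = 2`. -/
theorem stmt3 (p : ℕ) (hp : p.Prime) (h5 : 5 ≤ p) (h59 : p ≤ 59)
    (G : Type*) [AddCommGroup G] [Fintype G] (hcard : Fintype.card G = p)
    (g : G) (hg : AddSubgroup.zmultiples g = ⊤)
    (x₁ x₂ x₃ : ℕ) (h1 : 2 ≤ x₁) (h12 : x₁ ≤ x₂) (h23 : x₂ ≤ x₃) (h3 : x₃ ≤ p - 3)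
    (S : Multiset G) (hS : S = {g, g, x₁ • g, x₂ • g, x₃ • g})
    (hmin : IsMinZeroSum S) :
    seqIndex S = 2 ↔
      (x₁ = (p - 1) / 2 ∧ x₂ = (p + 3) / 2 ∧ x₃ = p - 3) ∨
      (p = 17 ∧ x₁ = 8 ∧ x₂ = 11 ∧ x₃ = 13) ∨
      (p = 19 ∧ x₁ = 6 ∧ x₂ = 14 ∧ x₃ = 16) ∨
      (p = 19 ∧ x₁ = 9 ∧ x₂ = 12 ∧ x₃ = 15) ∨
      (p = 23 ∧ x₁ = 11 ∧ x₂ = 15 ∧ x₃ = 18) ∨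
      (p = 23 ∧ x₁ = 9 ∧ x₂ = 15 ∧ x₃ = 20) ∨
      (p = 29 ∧ x₁ = 14 ∧ x₂ = 19 ∧ x₃ = 23) := by
  haveI : Fact p.Prime := ⟨hp⟩
  haveI : NeZero p := ⟨by omega⟩
  -- `g` has additive order `p`
  have hord : addOrderOf g = p := by
    have hdvd : addOrderOf g ∣ p := hcard ▸ addOrderOf_dvd_card
    rcases (Nat.Prime.eq_one_or_self_of_dvd hp _ hdvd) with h | h
    · exfalso
      have hg0 : g = 0 := AddMonoid.addOrderOf_eq_one_iff.1 h
      obtain ⟨a, b, hab⟩ := Fintype.exists_pair_of_one_lt_card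
        (by omega : 1 < Fintype.card G)
      have hall : ∀ x : G, x = 0 := by
        intro x
        have hx : x ∈ AddSubgroup.zmultiples g := hg ▸ AddSubgroup.mem_top x
        obtain ⟨k, hk⟩ := AddSubgroup.mem_zmultiples_iff.1 hx
        rw [hg0, smul_zero] at hk
        exact hk.symm
      exact hab ((hall a).trans (hall b).symm)
    · exact h
  have hpg : p • g = 0 := by rw [← hord]; exact addOrderOf_nsmul_eq_zero g
  have hmodsmul : ∀ m : ℕ, (m % p) • g = m • g := by
    intro m
    have h1 : (p * (m / p)) • g = (m / p) • (p • g) := by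
      rw [smul_smul, mul_comm]
    conv_rhs => rw [← Nat.mod_add_div m p]
    rw [add_nsmul, h1, hpg, smul_zero, add_zero]
  -- the isomorphism `ZMod p ≃+ G`
  let φ : ZMod p →+ G :=
    { toFun := fun t => t.val • g
      map_zero' := by simp
      map_add' := fun a b => by
        simp only [ZMod.val_add, hmodsmul, add_nsmul] }
  have hφ : ∀ t : ZMod p, φ t = t.val • g := fun _ => rfl
  have φinj : Function.Injective φ := by
    rw [injective_iff_map_eq_zero]
    intro a ha
    rw [hφ] at ha
    have hdvd : addOrderOf g ∣ a.val := addOrderOf_dvd_iff_nsmul_eq_zero.2 ha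
    rw [hord] at hdvd
    have hlt : a.val < p := ZMod.val_lt a
    rw [← ZMod.val_eq_zero]
    exact Nat.eq_zero_of_dvd_of_lt hdvd hlt
  have φbij : Function.Bijective φ :=
    (Fintype.bijective_iff_injective_and_card φ).2 ⟨φinj, by rw [ZMod.card, hcard]⟩
  let e : ZMod p ≃+ G := AddEquiv.ofBijective φ φbij
  have he : ∀ x : ℕ, e ((x : ZMod p)) = x • g := by
    intro x
    show φ ((x : ZMod p)) = x • g
    rw [hφ, ZMod.val_natCast, hmodsmul]
  -- transfer `S` to `ZMod p`
  set S₀ : Multiset (ZMod p) :=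
    {((1 : ℕ) : ZMod p), ((1 : ℕ) : ZMod p), (x₁ : ZMod p), (x₂ : ZMod p), (x₃ : ZMod p)}
    with hS₀
  have hSmap : S = S₀.map e := by
    rw [hS, hS₀]
    simp only [Multiset.insert_eq_cons, Multiset.map_cons, Multiset.map_singleton, he,
      one_nsmul]
  have hidx : seqIndex S = seqIndex S₀ := by rw [hSmap, seqIndex_map]
  -- the zero-sum condition
  have hmod : (2 + x₁ + x₂ + x₃) % p = 0 := by
    have hsum : S.sum = 0 := hmin.2.1
    rw [hS] at hsum
    have hz : (2 + x₁ + x₂ + x₃) • g = 0 := by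
      rw [add_nsmul, add_nsmul, add_nsmul, two_nsmul]
      simpa [Multiset.insert_eq_cons, Multiset.sum_cons, Multiset.sum_singleton,
        add_assoc] using hsum
    have hdvd : addOrderOf g ∣ 2 + x₁ + x₂ + x₃ := addOrderOf_dvd_iff_nsmul_eq_zero.2 hz
    rw [hord] at hdvd
    obtain ⟨c, hc⟩ := hdvd
    rw [hc]
    exact Nat.mul_mod_right p c
  -- the norm of `S₀` at a generator
  have hppos : (0 : ℝ) < p := by positivity
  have hnorm : ∀ t : ZMod p, t ≠ 0 →
      seqNorm t S₀ = (Fval p x₁ x₂ x₃ ((t⁻¹).val) : ℝ) / p := by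
    intro t ht
    unfold seqNorm
    rw [hS₀, ZMod.card]
    simp only [Multiset.insert_eq_cons, Multiset.map_cons, Multiset.map_singleton,
      Multiset.sum_cons, Multiset.sum_singleton, coeff_zmod h5 t ht]
    congr 1
    push_cast [Fval, one_mul]
    ring
  -- characterize membership in the norm-value set
  set T : Set ℝ := (fun t => seqNorm t S₀) '' {t : ZMod p | AddSubgroup.zmultiples t = ⊤}
    with hT
  have hTidx : seqIndex S₀ = sInf T := rfl
  have hTfin : T.Finite := Set.toFinite T
  have hTne : T.Nonempty :=
    ⟨seqNorm 1 S₀, ⟨1, (zmod_gen_iff h5 1).2 one_ne_zero, rfl⟩⟩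
  have hmem_iff : ∀ r : ℝ, r ∈ T ↔
      ∃ v, v < p ∧ 0 < v ∧ (Fval p x₁ x₂ x₃ v : ℝ) / p = r := by
    intro r
    constructor
    · rintro ⟨t, ht, rfl⟩
      have ht0 : t ≠ 0 := (zmod_gen_iff h5 t).1 ht
      have hti : t⁻¹ ≠ 0 := inv_ne_zero ht0
      refine ⟨(t⁻¹).val, ZMod.val_lt _, ?_, (hnorm t ht0).symm⟩
      have hv0 := (ZMod.val_eq_zero (t⁻¹)).not.2 hti
      omega
    · rintro ⟨v, hvp, hv0, rfl⟩
      have hvz : ((v : ℕ) : ZMod p) ≠ 0 := by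
        rw [Ne, ZMod.natCast_eq_zero_iff]
        intro hdv
        have := Nat.eq_zero_of_dvd_of_lt hdv hvp
        omega
      refine ⟨((v : ZMod p))⁻¹, (zmod_gen_iff h5 _).2 (inv_ne_zero hvz), ?_⟩
      show seqNorm ((v : ZMod p))⁻¹ S₀ = _
      rw [hnorm _ (inv_ne_zero hvz), inv_inv, ZMod.val_cast_of_lt hvp]
  -- `seqIndex S₀ = 2 ↔ OKp p x₁ x₂ x₃`
  have hchar : seqIndex S₀ = 2 ↔ OKp p x₁ x₂ x₃ := by
    rw [hTidx]
    constructor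
    · intro h
      constructor
      · have hmem : sInf T ∈ T := hTne.csInf_mem hTfin
        rw [h] at hmem
        obtain ⟨v, hvp, hv0, hfv⟩ := (hmem_iff 2).1 hmem
        refine ⟨v, hvp, hv0, ?_⟩
        have heq : (Fval p x₁ x₂ x₃ v : ℝ) = 2 * p := by
          rw [div_eq_iff hppos.ne'] at hfv
          linarith
        exact_mod_cast heq
      · intro v hvp hv0
        have hmem : (Fval p x₁ x₂ x₃ v : ℝ) / p ∈ T :=
          (hmem_iff _).2 ⟨v, hvp, hv0, rfl⟩
        have hle := csInf_le hTfin.bddBelow hmem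
        rw [h, le_div_iff₀ hppos] at hle
        have h2 : 2 * (p : ℝ) ≤ (Fval p x₁ x₂ x₃ v : ℝ) := by linarith
        exact_mod_cast h2
    · rintro ⟨⟨v, hvp, hv0, hfv⟩, hall⟩
      have h2mem : (2 : ℝ) ∈ T := by
        refine (hmem_iff 2).2 ⟨v, hvp, hv0, ?_⟩
        rw [hfv]
        push_cast
        field_simp
      refine le_antisymm (csInf_le hTfin.bddBelow h2mem) (le_csInf hTne ?_)
      rintro b hb
      obtain ⟨w, hwp, hw0, rfl⟩ := (hmem_iff b).1 hb
      have hF := hall w hwp hw0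
      rw [le_div_iff₀ hppos]
      have : (2 * p : ℝ) ≤ (Fval p x₁ x₂ x₃ w : ℝ) := by exact_mod_cast hF
      linarith
  rw [hidx, hchar]
  exact key_apply p (keyP_all p hp h5 h59) h5 x₁ x₂ x₃ h1 h12 h23 h3 hmod
end

section
/- Let p > 17 be a prime, let G = ⟨g⟩ be a cyclic group of order p, and let S = g·g·(8g)·((p−6)g)·((p−4)g) be a minimal zero-sum sequence over G (this is the case a = 4, b = 6, c = 8 of the form S = g·g·(cg)·((p−b)g)·((p−a)g) with 2 + c = a + b and 2 < a ≤ b < c < p/2). Then ind(S) = 1. -/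
section Aux

variable {G : Type*} [AddCommGroup G] [Fintype G]

lemma addOrderOf_of_gen (h : G) (hh : AddSubgroup.zmultiples h = ⊤) :
    addOrderOf h = Fintype.card G := by
  rw [← Nat.card_eq_fintype_card]
  exact addOrderOf_eq_card_of_forall_mem_zmultiples (fun x => by rw [hh]; trivial)

lemma coeff_eq {h x : G} {n : ℕ} (hord : addOrderOf h = n) (m : ℕ)
    (h1 : 1 ≤ m) (h2 : m ≤ n) (hx : m • h = x) : coeff h x = m := by
  classical
  have hex : ∃ k : ℕ, 0 < k ∧ k • h = x := ⟨m, h1, hx⟩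
  unfold coeff
  split
  case isFalse hno => exact absurd hex hno
  case isTrue hex =>
  have hle : Nat.find hex ≤ m := Nat.find_le ⟨h1, hx⟩
  rcases Nat.find_spec hex with ⟨hk0, hkx⟩
  by_contra hne
  have hlt : Nat.find hex < m := lt_of_le_of_ne hle hne
  have hz : (m - Nat.find hex) • h = 0 := by
    have h' : (m - Nat.find hex) • h + Nat.find hex • h = m • h := by
      rw [← add_nsmul, Nat.sub_add_cancel hle]
    rw [hkx, hx] at h'
    have := add_right_cancel (h'.trans (zero_add x).symm)
    exact this
  have hdvd : n ∣ m - Nat.find hex := hord ▸ addOrderOf_dvd_of_nsmul_eq_zero hz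
  have := Nat.le_of_dvd (by omega) hdvd
  omega

lemma exists_rep (h : G) (hh : AddSubgroup.zmultiples h = ⊤) (x : G) :
    ∃ m : ℕ, 1 ≤ m ∧ m ≤ Fintype.card G ∧ m • h = x := by
  have hx : x ∈ AddSubgroup.zmultiples h := by rw [hh]; trivial
  obtain ⟨k, hk⟩ := AddSubgroup.mem_zmultiples_iff.mp hx
  set n := Fintype.card G with hn
  have hnpos : 0 < n := Fintype.card_pos
  have hord : addOrderOf h = n := addOrderOf_of_gen h hh
  have hzero : ((n : ℤ)) • h = 0 := by
    rw [natCast_zsmul, ← hord, addOrderOf_nsmul_eq_zero]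
  have hmod : (k % (n : ℤ)) • h = x := by
    conv_rhs => rw [← hk]
    have hz2 : ((n : ℤ) * (k / (n : ℤ))) • h = 0 := by
      rw [mul_comm, mul_zsmul, hzero, smul_zero]
    rw [Int.emod_def, sub_zsmul, hz2]
    simp
  have hmodlt : k % (n : ℤ) < n := Int.emod_lt_of_pos k (by exact_mod_cast hnpos)
  have hmodge : 0 ≤ k % (n : ℤ) := Int.emod_nonneg k (by exact_mod_cast hnpos.ne')
  rcases eq_or_lt_of_le hmodge with hz | hpos
  · refine ⟨n, hnpos, le_refl n, ?_⟩
    have : x = 0 := by rw [← hmod, ← hz, zero_zsmul]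
    rw [this, ← hord, addOrderOf_nsmul_eq_zero]
  · refine ⟨(k % (n : ℤ)).toNat, by omega, by omega, ?_⟩
    rw [← natCast_zsmul, Int.toNat_of_nonneg hmodge, hmod]

lemma coeff_spec_s4 (h : G) (hh : AddSubgroup.zmultiples h = ⊤) (x : G) :
    1 ≤ coeff h x ∧ coeff h x ≤ Fintype.card G ∧ (coeff h x) • h = x := by
  obtain ⟨m, h1, h2, h3⟩ := exists_rep h hh x
  have := coeff_eq (addOrderOf_of_gen h hh) m h1 h2 h3
  rw [this]; exact ⟨h1, h2, h3⟩

lemma sum_map_coeff_smul (h : G) (S : Multiset G)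
    (hh : AddSubgroup.zmultiples h = ⊤) :
    ((S.map (coeff h)).sum) • h = S.sum := by
  induction S using Multiset.induction with
  | empty => simp
  | cons a s ih =>
      simp only [Multiset.map_cons, Multiset.sum_cons, add_nsmul, ih]
      rw [(coeff_spec_s4 h hh a).2.2]

lemma norm_ge_one (h : G) (hh : AddSubgroup.zmultiples h = ⊤)
    (S : Multiset G) (hS0 : S ≠ 0) (hSsum : S.sum = 0) : 1 ≤ seqNorm h S := by
  set n := Fintype.card G with hn
  have hnpos : 0 < n := Fintype.card_pos
  set c := (S.map (coeff h)).sum with hc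
  have hcs : c • h = 0 := by rw [hc, sum_map_coeff_smul h S hh, hSsum]
  have hdvd : n ∣ c := by
    rw [hn, ← addOrderOf_of_gen h hh]
    exact addOrderOf_dvd_of_nsmul_eq_zero hcs
  have hcpos : 0 < c := by
    obtain ⟨a, ha⟩ := Multiset.exists_mem_of_ne_zero hS0
    by_contra hcz
    have hc0 : c = 0 := by omega
    have := Multiset.sum_eq_zero_iff.mp hc0 (coeff h a) (Multiset.mem_map_of_mem _ ha)
    have := (coeff_spec_s4 h hh a).1
    omega
  have hcn : n ≤ c := Nat.le_of_dvd hcpos hdvd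
  rw [seqNorm, le_div_iff₀ (by exact_mod_cast hnpos), one_mul]
  exact_mod_cast hn ▸ hcn

end Aux

/-- for a prime `p > 17`, the minimal zero-sum sequence
`S = g·g·(8g)·((p-6)g)·((p-4)g)` (case `a = 4, b = 6, c = 8`) has `ind(S) = 1`. -/
theorem stmt4 (p : ℕ) (hp : p.Prime) (h17 : 17 < p)
    (G : Type*) [AddCommGroup G] [Fintype G] (hcard : Fintype.card G = p)
    (g : G) (hg : AddSubgroup.zmultiples g = ⊤)
    (S : Multiset G) (hS : S = {g, g, (8 : ℕ) • g, (p - 6) • g, (p - 4) • g})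
    (hmin : IsMinZeroSum S) :
    seqIndex S = 1 := by
  have hp0 : 0 < p := hp.pos
  have hpodd : p % 2 = 1 := Nat.odd_iff.mp (hp.odd_of_ne_two (by omega))
  have hpg : p • g = 0 := by
    have := addOrderOf_of_gen g hg
    rw [hcard] at this
    rw [← this, addOrderOf_nsmul_eq_zero]
  set t : ℕ := p / 8 + 1 with ht
  have h8 : p < 8 * t := by omega
  have h6 : 6 * t < p := by omega
  have ht1 : 1 ≤ t := by omega
  -- get the inverse s of t mod p
  haveI : Fact p.Prime := ⟨hp⟩
  have htz : (t : ZMod p) ≠ 0 := by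
    intro hcon
    have hdvd : p ∣ t := (ZMod.natCast_eq_zero_iff t p).mp hcon
    have := Nat.le_of_dvd (by omega) hdvd
    omega
  set s : ℕ := ((t : ZMod p)⁻¹).val with hs
  have hts : (t * s) % p = 1 := by
    have h1 : ((t * s : ℕ) : ZMod p) = 1 := by
      rw [Nat.cast_mul, hs, ZMod.natCast_val, ZMod.cast_id]
      exact mul_inv_cancel₀ htz
    have := (ZMod.natCast_eq_natCast_iff' (t * s) 1 p).mp (by rw [h1]; norm_num)
    simpa [Nat.mod_eq_of_lt (show 1 < p by omega)] using this
  set h : G := s • g with hh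
  have hgth : t • h = g := by
    rw [hh, smul_smul]
    have hdm : t * s = p * (t * s / p) + 1 := by
      conv_lhs => rw [← Nat.div_add_mod (t * s) p]
      rw [hts]
    rw [hdm, add_nsmul, one_nsmul, mul_nsmul, hpg, smul_zero, zero_add]
  have hhgen : AddSubgroup.zmultiples h = ⊤ := by
    apply le_antisymm le_top
    rw [← hg]
    rw [AddSubgroup.zmultiples_le]
    rw [← hgth]
    exact AddSubgroup.nsmul_mem _ (AddSubgroup.mem_zmultiples h) t
  have hordh : addOrderOf h = p := by rw [addOrderOf_of_gen h hhgen, hcard]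
  have hph : p • h = 0 := by rw [← hordh, addOrderOf_nsmul_eq_zero]
  -- coefficients
  have hcg : coeff h g = t := coeff_eq (hordh.trans hcard.symm) t ht1 (by omega)
    hgth
  have hc8 : coeff h ((8 : ℕ) • g) = 8 * t - p := by
    apply coeff_eq (hordh.trans hcard.symm) _ (by omega) (by omega)
    rw [← hgth]
    conv_rhs => rw [smul_smul]
    have h2 : 8 * t = p + (8 * t - p) := by omega
    conv_rhs => rw [h2, add_nsmul, hph, zero_add]
  have hc6 : coeff h ((p - 6) • g) = p - 6 * t := by
    apply coeff_eq (hordh.trans hcard.symm) _ (by omega) (by omega)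
    rw [← hgth]
    conv_rhs => rw [smul_smul]
    have h2 : (p - 6) * t = p * (t - 1) + (p - 6 * t) := by
      zify [show 6 ≤ p by omega, ht1, show 6 * t ≤ p by omega]
      ring
    have h3 : (p * (t - 1)) • h = 0 := by
      rw [mul_comm, ← smul_smul, hph, smul_zero]
    conv_rhs => rw [h2, add_nsmul, h3, zero_add]
  have hc4 : coeff h ((p - 4) • g) = p - 4 * t := by
    apply coeff_eq (hordh.trans hcard.symm) _ (by omega) (by omega)
    rw [← hgth]
    conv_rhs => rw [smul_smul]
    have h2 : (p - 4) * t = p * (t - 1) + (p - 4 * t) := by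
      zify [show 4 ≤ p by omega, ht1, show 4 * t ≤ p by omega]
      ring
    have h3 : (p * (t - 1)) • h = 0 := by
      rw [mul_comm, ← smul_smul, hph, smul_zero]
    conv_rhs => rw [h2, add_nsmul, h3, zero_add]
  have hnorm1 : seqNorm h S = 1 := by
    rw [seqNorm, hS, hcard]
    have : (({g, g, (8 : ℕ) • g, (p - 6) • g, (p - 4) • g} : Multiset G).map
        (coeff h)).sum = p := by
      simp only [Multiset.insert_eq_cons, Multiset.map_cons, Multiset.map_singleton,
        Multiset.sum_cons, Multiset.sum_singleton, hcg, hc8, hc6, hc4]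
      omega
    rw [this, div_self (by exact_mod_cast hp0.ne')]
  obtain ⟨hS0, hSsum, -⟩ := hmin
  rw [seqIndex]
  have hlb : ∀ y ∈ (fun g => seqNorm g S) '' {g : G | AddSubgroup.zmultiples g = ⊤},
      (1 : ℝ) ≤ y := by
    rintro y ⟨h', hh', rfl⟩
    exact norm_ge_one h' hh' S hS0 hSsum
  have hmem : (1 : ℝ) ∈ (fun g => seqNorm g S) '' {g : G | AddSubgroup.zmultiples g = ⊤} :=
    ⟨h, hhgen, hnorm1⟩
  exact le_antisymm (csInf_le ⟨1, hlb⟩ hmem) (le_csInf ⟨1, hmem⟩ hlb)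
end

section
/- Let p > 19 be a prime, let G = ⟨g⟩ be a cyclic group of order p, and let S = g·g·(9g)·((p−7)g)·((p−4)g) be a minimal zero-sum sequence over G (this is the case a = 4, b = 7, c = 9 of the form S = g·g·(cg)·((p−b)g)·((p−a)g) with 2 + c = a + b and 2 < a ≤ b < c < p/2). Then ind(S) = 1. -/
section Aux

variable {G : Type*} [AddCommGroup G]

private lemma aux_mod_nsmul {p : ℕ} (h : G) (hord : addOrderOf h = p) (c : ℕ) :
    c • h = (c % p) • h := by
  have hph : p • h = 0 := by rw [← hord]; exact addOrderOf_nsmul_eq_zero h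
  conv_lhs => rw [← Nat.div_add_mod c p]
  rw [add_nsmul, mul_nsmul, hph]
  simp

private lemma aux_key {p : ℕ} (h : G) (hord : addOrderOf h = p) (a b : ℕ)
    (hab : (a : ZMod p) = (b : ZMod p)) : a • h = b • h := by
  rw [ZMod.natCast_eq_natCast_iff] at hab
  rw [aux_mod_nsmul h hord a, aux_mod_nsmul h hord b, hab]

private lemma aux_coeff_nsmul {p : ℕ} (h : G) (hord : addOrderOf h = p)
    (m : ℕ) (h1 : 1 ≤ m) (h2 : m ≤ p) : coeff h (m • h) = m := by
  classical
  have hex : ∃ k : ℕ, 0 < k ∧ k • h = m • h := ⟨m, h1, rfl⟩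
  rw [coeff, dif_pos hex, Nat.find_eq_iff]
  refine ⟨⟨h1, rfl⟩, ?_⟩
  rintro k hk ⟨hk0, hkh⟩
  have hmk : (m - k) • h = 0 := by
    have h2' : k • h + (m - k) • h = k • h + 0 := by
      rw [add_zero, ← add_nsmul, Nat.add_sub_cancel' hk.le, hkh]
    exact add_left_cancel h2'
  have hdvd : p ∣ m - k := hord ▸ addOrderOf_dvd_of_nsmul_eq_zero hmk
  have := Nat.le_of_dvd (by omega) hdvd
  omega

private lemma aux_coeff_spec {p : ℕ} (hp : 0 < p) (h : G)
    (hgen : AddSubgroup.zmultiples h = ⊤) (hord : addOrderOf h = p) (x : G) :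
    0 < coeff h x ∧ coeff h x • h = x := by
  classical
  have hx : x ∈ AddSubgroup.zmultiples h := hgen ▸ AddSubgroup.mem_top x
  obtain ⟨z, hz⟩ := AddSubgroup.mem_zmultiples_iff.mp hx
  have hp' : (0 : ℤ) < (p : ℤ) := by exact_mod_cast hp
  have hex : ∃ k : ℕ, 0 < k ∧ k • h = x := by
    have hzmod : ((z % (p : ℤ)).toNat : ℤ) = z % (p : ℤ) :=
      Int.toNat_of_nonneg (Int.emod_nonneg z hp'.ne')
    have hph : p • h = 0 := by rw [← hord]; exact addOrderOf_nsmul_eq_zero h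
    have h1 : z • h = (z % (p : ℤ)) • h := by
      have hph' : (p : ℤ) • h = 0 := by rw [natCast_zsmul, hph]
      conv_lhs => rw [← Int.mul_ediv_add_emod z (p : ℤ)]
      rw [add_zsmul, mul_comm, mul_zsmul, hph']
      simp
    have hzs : (z % (p : ℤ)).toNat • h = x := by
      rw [← natCast_zsmul, hzmod, ← h1, hz]
    by_cases h0 : (z % (p : ℤ)).toNat = 0
    · refine ⟨p, hp, ?_⟩
      have hx0 : x = 0 := by rw [← hzs, h0, zero_nsmul]
      rw [hx0]; exact hph
    · exact ⟨_, Nat.pos_of_ne_zero h0, hzs⟩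
  rw [coeff, dif_pos hex]
  exact Nat.find_spec hex

private lemma aux_sum_map_nsmul (h : G) (m : Multiset ℕ) :
    (m.map (· • h)).sum = m.sum • h := by
  induction m using Multiset.induction_on with
  | empty => simp
  | cons a s ih => simp [ih, add_nsmul]

end Aux

/-- for a prime `p > 19`, the minimal zero-sum sequence
`S = g·g·(9g)·((p-7)g)·((p-4)g)` (case `a = 4, b = 7, c = 9`) has `ind(S) = 1`. -/
theorem stmt5 (p : ℕ) (hp : p.Prime) (h19 : 19 < p)
    (G : Type*) [AddCommGroup G] [Fintype G] (hcard : Fintype.card G = p)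
    (g : G) (hg : AddSubgroup.zmultiples g = ⊤)
    (S : Multiset G) (hS : S = {g, g, (9 : ℕ) • g, (p - 7) • g, (p - 4) • g})
    (hmin : IsMinZeroSum S) :
    seqIndex S = 1 := by
  classical
  subst hS
  haveI : Fact p.Prime := ⟨hp⟩
  have hp0 : 0 < p := hp.pos
  have hNatCard : Nat.card G = p := by rw [Nat.card_eq_fintype_card, hcard]
  -- order of any generator is p
  have hord_of_gen : ∀ h : G, AddSubgroup.zmultiples h = ⊤ → addOrderOf h = p := by
    intro h hh
    rw [← Nat.card_zmultiples, hh, AddSubgroup.card_top, hNatCard]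
  -- any nonzero element is a generator
  have hgen_of_ne : ∀ h : G, h ≠ 0 → AddSubgroup.zmultiples h = ⊤ := by
    intro h hh
    have hdvd : addOrderOf h ∣ p := hcard ▸ addOrderOf_dvd_card
    have := (Nat.Prime.eq_one_or_self_of_dvd hp _ hdvd)
    have hord : addOrderOf h = p := by
      rcases this with h1 | h1
      · exact absurd (AddMonoid.addOrderOf_eq_one_iff.mp h1) hh
      · exact h1
    apply AddSubgroup.eq_top_of_card_eq
    rw [Nat.card_zmultiples, hord, hNatCard]
  have hgord : addOrderOf g = p := hord_of_gen g hg
  -- arithmetic facts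
  have h2 : ¬ (2 ∣ p) := fun hd => by
    rcases hp.eq_one_or_self_of_dvd 2 hd with h' | h' <;> omega
  have h3 : ¬ (3 ∣ p) := fun hd => by
    rcases hp.eq_one_or_self_of_dvd 3 hd with h' | h' <;> omega
  have h5 : ¬ (5 ∣ p) := fun hd => by
    rcases hp.eq_one_or_self_of_dvd 5 hd with h' | h' <;> omega
  have h2' : p % 2 ≠ 0 := fun hh => h2 (Nat.dvd_of_mod_eq_zero hh)
  have h3' : p % 3 ≠ 0 := fun hh => h3 (Nat.dvd_of_mod_eq_zero hh)
  have h5' : p % 5 ≠ 0 := fun hh => h5 (Nat.dvd_of_mod_eq_zero hh)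
  have h9v : p < 9 * (p / 9 + 1) := by omega
  have h7v : 7 * (p / 9 + 1) < p := by
    rcases Nat.lt_or_ge (p / 9) 4 with hq | hq
    · have hub : p < 36 := by omega
      interval_cases p <;> omega
    · omega
  set v : ℕ := p / 9 + 1 with hv
  have hv1 : 1 ≤ v := by omega
  -- the multiplier and the new generator
  set vz : ZMod p := (v : ZMod p) with hvzdef
  have hvz : vz ≠ 0 := by
    rw [hvzdef, Ne, ZMod.natCast_eq_zero_iff]
    intro hd
    have := Nat.le_of_dvd (by omega) hd
    omega
  set u : ℕ := (vz⁻¹).val with hu_def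
  have hu : (u : ZMod p) = vz⁻¹ := by rw [hu_def, ZMod.natCast_val, ZMod.cast_id]
  set h : G := u • g with hh_def
  have hhne : h ≠ 0 := by
    intro h0
    have hdvd : p ∣ u := hgord ▸ addOrderOf_dvd_of_nsmul_eq_zero h0
    have : (u : ZMod p) = 0 := (ZMod.natCast_eq_zero_iff u p).mpr hdvd
    rw [hu] at this
    exact inv_ne_zero hvz this
  have hhgen : AddSubgroup.zmultiples h = ⊤ := hgen_of_ne h hhne
  have hhord : addOrderOf h = p := hord_of_gen h hhgen
  -- expressing elements of S in terms of h
  have hsmul : ∀ m : ℕ, m • h = (m * u) • g := by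
    intro m; rw [hh_def, ← mul_nsmul, mul_comm u m]
  have hexpr : ∀ m n : ℕ, (m : ZMod p) = (n : ZMod p) * vz → n • g = m • h := by
    intro m n hmn
    rw [hsmul]
    refine (aux_key g hgord (m * u) n ?_).symm
    push_cast
    rw [hu, hmn, mul_assoc, mul_inv_cancel₀ hvz, mul_one]
  have e1 : g = v • h := by
    have := hexpr v 1 (by rw [hvzdef]; push_cast; ring)
    rw [← this, one_nsmul]
  have e3 : (9 : ℕ) • g = (9 * v - p) • h := by
    refine hexpr _ _ ?_
    have : ((9 * v - p : ℕ) : ZMod p) = ((9 * v : ℕ) : ZMod p) - ((p : ℕ) : ZMod p) := by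
      rw [← Nat.cast_sub h9v.le]
    rw [this, ZMod.natCast_self, hvzdef]
    push_cast
    ring
  have e4 : (p - 7) • g = (p - 7 * v) • h := by
    refine hexpr _ _ ?_
    have l1 : ((p - 7 * v : ℕ) : ZMod p) = ((p : ℕ) : ZMod p) - ((7 * v : ℕ) : ZMod p) := by
      rw [← Nat.cast_sub h7v.le]
    have l2 : ((p - 7 : ℕ) : ZMod p) = ((p : ℕ) : ZMod p) - ((7 : ℕ) : ZMod p) := by
      rw [← Nat.cast_sub (by omega : 7 ≤ p)]
    rw [l1, l2, ZMod.natCast_self, hvzdef]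
    push_cast
    ring
  have e5 : (p - 4) • g = (p - 4 * v) • h := by
    refine hexpr _ _ ?_
    have l1 : ((p - 4 * v : ℕ) : ZMod p) = ((p : ℕ) : ZMod p) - ((4 * v : ℕ) : ZMod p) := by
      rw [← Nat.cast_sub (by omega : 4 * v ≤ p)]
    have l2 : ((p - 4 : ℕ) : ZMod p) = ((p : ℕ) : ZMod p) - ((4 : ℕ) : ZMod p) := by
      rw [← Nat.cast_sub (by omega : 4 ≤ p)]
    rw [l1, l2, ZMod.natCast_self, hvzdef]
    push_cast
    ring
  -- compute the coefficients
  have c1 : coeff h g = v := by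
    rw [e1]; exact aux_coeff_nsmul h hhord v hv1 (by omega)
  have c3 : coeff h ((9 : ℕ) • g) = 9 * v - p := by
    rw [e3]; exact aux_coeff_nsmul h hhord _ (by omega) (by omega)
  have c4 : coeff h ((p - 7) • g) = p - 7 * v := by
    rw [e4]; exact aux_coeff_nsmul h hhord _ (by omega) (by omega)
  have c5 : coeff h ((p - 4) • g) = p - 4 * v := by
    rw [e5]; exact aux_coeff_nsmul h hhord _ (by omega) (by omega)
  -- the norm with respect to h is 1
  have hnorm : seqNorm h {g, g, (9 : ℕ) • g, (p - 7) • g, (p - 4) • g} = 1 := by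
    rw [seqNorm]
    have hsum : (Multiset.map (coeff h) {g, g, (9 : ℕ) • g, (p - 7) • g, (p - 4) • g}).sum
        = p := by
      simp only [Multiset.insert_eq_cons, Multiset.map_cons, Multiset.map_singleton,
        Multiset.sum_cons, Multiset.sum_singleton, c1, c3, c4, c5]
      omega
    rw [hsum, hcard, div_self (by exact_mod_cast hp0.ne')]
  -- 1 is a member of the norm set
  have hmem : (1 : ℝ) ∈ (fun x => seqNorm x {g, g, (9 : ℕ) • g, (p - 7) • g, (p - 4) • g})
      '' {x : G | AddSubgroup.zmultiples x = ⊤} :=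
    ⟨h, hhgen, by show seqNorm h {g, g, (9 : ℕ) • g, (p - 7) • g, (p - 4) • g} = 1; exact hnorm⟩
  -- every member of the norm set is at least 1
  have hlb : ∀ x ∈ (fun x => seqNorm x {g, g, (9 : ℕ) • g, (p - 7) • g, (p - 4) • g})
      '' {x : G | AddSubgroup.zmultiples x = ⊤}, (1 : ℝ) ≤ x := by
    rintro x ⟨h', hh', rfl⟩
    dsimp only
    have hh'ord : addOrderOf h' = p := hord_of_gen h' hh'
    have hspec := aux_coeff_spec hp0 h' hh' hh'ord
    set T : Multiset G := {g, g, (9 : ℕ) • g, (p - 7) • g, (p - 4) • g} with hT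
    have hsmul0 : (T.map (coeff h')).sum • h' = 0 := by
      rw [← aux_sum_map_nsmul]
      have : (T.map (coeff h')).map (· • h') = T.map id := by
        rw [Multiset.map_map]
        exact Multiset.map_congr rfl (fun x _ => (hspec x).2)
      rw [this, Multiset.map_id]
      exact hmin.2.1
    have hdvd : p ∣ (T.map (coeff h')).sum :=
      hh'ord ▸ addOrderOf_dvd_of_nsmul_eq_zero hsmul0
    have hpos : 0 < (T.map (coeff h')).sum := by
      rw [hT]
      simp only [Multiset.insert_eq_cons, Multiset.map_cons, Multiset.map_singleton,
        Multiset.sum_cons, Multiset.sum_singleton]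
      have := (hspec g).1
      omega
    have hge : p ≤ (T.map (coeff h')).sum := Nat.le_of_dvd hpos hdvd
    rw [seqNorm, hcard]
    rw [le_div_iff₀ (by exact_mod_cast hp0)]
    rw [one_mul]
    exact_mod_cast hge
  rw [seqIndex]
  exact le_antisymm (csInf_le ⟨1, fun x hx => hlb x hx⟩ hmem)
    (le_csInf ⟨1, hmem⟩ fun x hx => hlb x hx)
end

section
/- Let p > 24 be a prime, let G = ⟨g⟩ be a cyclic group of order p, and let S = g·g·(6g)·((p−5)g)·((p−3)g) be a minimal zero-sum sequence over G (this is the case a = 3, b = 5, c = 6 of the form S = g·g·(cg)·((p−b)g)·((p−a)g) with 2 + c = a + b and 2 < a ≤ b < c < p/2). Then ind(S) = 1. -/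
section Aux
variable {G : Type*} [AddCommGroup G] [Fintype G] {p : ℕ}

lemma order_of_gen (hcard : Fintype.card G = p) {h : G}
    (hh : AddSubgroup.zmultiples h = ⊤) : addOrderOf h = p := by
  rw [addOrderOf_eq_card_of_forall_mem_zmultiples (fun x => hh ▸ AddSubgroup.mem_top x),
    Nat.card_eq_fintype_card, hcard]

lemma coeff_nsmul_eq (hcard : Fintype.card G = p) {h : G}
    (hh : AddSubgroup.zmultiples h = ⊤) {m : ℕ} (h1 : 0 < m) (h2 : m ≤ p) :
    coeff h (m • h) = m := by
  have hord := order_of_gen hcard hh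
  classical
  have hex : ∃ k : ℕ, 0 < k ∧ k • h = m • h := ⟨m, h1, rfl⟩
  simp only [coeff]
  rw [dif_pos hex, Nat.find_eq_iff]
  refine ⟨⟨h1, rfl⟩, fun k hk hk' => ?_⟩
  obtain ⟨hk0, hkh⟩ := hk'
  have hmod : k ≡ m [MOD addOrderOf h] := nsmul_eq_nsmul_iff_modEq.mp hkh
  rw [hord] at hmod
  have hdvd : p ∣ m - k := (Nat.modEq_iff_dvd' hk.le).mp hmod
  have := Nat.le_of_dvd (by omega) hdvd
  omega

lemma coeff_exists (hcard : Fintype.card G = p) (hp : 0 < p) {h : G}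
    (hh : AddSubgroup.zmultiples h = ⊤) (x : G) :
    ∃ k : ℕ, 0 < k ∧ k • h = x := by
  have hx : x ∈ AddSubgroup.zmultiples h := hh ▸ AddSubgroup.mem_top x
  have hfin : IsOfFinAddOrder h := isOfFinAddOrder_of_finite h
  obtain ⟨n, hn⟩ := hfin.mem_multiples_iff_mem_zmultiples.mpr hx
  rcases Nat.eq_zero_or_pos n with rfl | hn0
  · refine ⟨p, hp, ?_⟩
    have hord := order_of_gen hcard hh
    rw [← hord, addOrderOf_nsmul_eq_zero, ← hn]; simp
  · exact ⟨n, hn0, hn⟩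

lemma coeff_pos_smul (hcard : Fintype.card G = p) (hp : 0 < p) {h : G}
    (hh : AddSubgroup.zmultiples h = ⊤) (x : G) :
    0 < coeff h x ∧ (coeff h x) • h = x := by
  classical
  have hex := coeff_exists hcard hp hh x
  simp only [coeff]
  rw [dif_pos hex]
  exact Nat.find_spec hex

end Aux


/-- for a prime `p > 24`, the minimal zero-sum sequence
`S = g·g·(6g)·((p-5)g)·((p-3)g)` (case `a = 3, b = 5, c = 6`) has `ind(S) = 1`. -/
theorem stmt7 (p : ℕ) (hp : p.Prime) (h24 : 24 < p)
    (G : Type*) [AddCommGroup G] [Fintype G] (hcard : Fintype.card G = p)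
    (g : G) (hg : AddSubgroup.zmultiples g = ⊤)
    (S : Multiset G) (hS : S = {g, g, (6 : ℕ) • g, (p - 5) • g, (p - 3) • g})
    (hmin : IsMinZeroSum S) :
    seqIndex S = 1 := by
  haveI : Fact p.Prime := ⟨hp⟩
  have h2 : ¬ (2 ∣ p) := fun h => by
    rcases (Nat.Prime.eq_one_or_self_of_dvd hp 2 h) with h' | h' <;> omega
  have h3 : ¬ (3 ∣ p) := fun h => by
    rcases (Nat.Prime.eq_one_or_self_of_dvd hp 3 h) with h' | h' <;> omega
  have h5 : ¬ (5 ∣ p) := fun h => by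
    rcases (Nat.Prime.eq_one_or_self_of_dvd hp 5 h) with h' | h' <;> omega
  have hne25 : p ≠ 25 := by rintro rfl; exact h5 ⟨5, rfl⟩
  have hmod6 : p % 6 = 1 ∨ p % 6 = 5 := by omega
  obtain ⟨u, hu_def⟩ : ∃ u : ℕ, u = p / 6 + 1 := ⟨_, rfl⟩
  have hu0 : 0 < u := by omega
  have hup : u < p := by omega
  have h6u : p < 6 * u ∧ 6 * u < 2 * p := by omega
  have h5u : 5 * u < p := by omega
  have h3u : 3 * u < p := by omega
  have hp0 : 0 < p := hp.pos
  -- the inverse multiplier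
  obtain ⟨v, hv_def⟩ : ∃ v : ℕ, v = ((u : ZMod p)⁻¹).val := ⟨_, rfl⟩
  have huz : (u : ZMod p) ≠ 0 := by
    rw [Ne, ZMod.natCast_eq_zero_iff]
    exact fun h => by have := Nat.le_of_dvd hu0 h; omega
  have hvz : ((v : ℕ) : ZMod p) = (u : ZMod p)⁻¹ := by
    rw [hv_def, ZMod.natCast_val, ZMod.cast_id]
  have huv : (u * v) ≡ 1 [MOD p] := by
    have : ((u * v : ℕ) : ZMod p) = ((1 : ℕ) : ZMod p) := by
      push_cast
      rw [hvz, mul_inv_cancel₀ huz]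
    exact (ZMod.natCast_eq_natCast_iff _ _ _).mp this
  obtain ⟨h, hh_def⟩ : ∃ h : G, h = v • g := ⟨_, rfl⟩
  have hordg : addOrderOf g = p := order_of_gen hcard hg
  have hgu : u • h = g := by
    rw [hh_def, ← mul_nsmul]
    have : (v * u) • g = 1 • g := by
      apply nsmul_eq_nsmul_iff_modEq.mpr
      rw [hordg]
      exact Nat.ModEq.trans (by rw [Nat.mul_comm]) huv
    rw [this, one_nsmul]
  have hhgen : AddSubgroup.zmultiples h = ⊤ := by
    rw [eq_top_iff, ← hg]
    rw [AddSubgroup.zmultiples_le]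
    exact ⟨(u : ℤ), by simpa using hgu⟩
  have hordh : addOrderOf h = p := order_of_gen hcard hhgen
  -- ModEq helper
  have modsmul : ∀ a b : ℕ, a ≡ b [MOD p] → a • h = b • h := fun a b hab =>
    nsmul_eq_nsmul_iff_modEq.mpr (hordh ▸ hab)
  -- coefficient computations for h
  have c1 : coeff h g = u := by
    rw [← hgu]; exact coeff_nsmul_eq hcard hhgen hu0 hup.le
  have e6 : (6 : ℕ) • g = (6 * u - p) • h := by
    rw [← hgu, ← mul_nsmul]
    exact (modsmul _ _ ((Nat.modEq_iff_dvd' (by omega)).mpr ⟨1, by omega⟩)).symm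
  have c6 : coeff h ((6 : ℕ) • g) = 6 * u - p := by
    rw [e6]; exact coeff_nsmul_eq hcard hhgen (by omega) (by omega)
  have e5 : (p - 5) • g = (p - 5 * u) • h := by
    rw [← hgu, ← mul_nsmul]
    refine modsmul _ _ ?_
    apply (ZMod.natCast_eq_natCast_iff _ _ _).mp
    have : ((p - 5 : ℕ) : ZMod p) = -5 := by
      rw [Nat.cast_sub (by omega)]; simp
    push_cast [this, Nat.cast_sub h5u.le]
    rw [ZMod.natCast_self]
    ring
  have c5 : coeff h ((p - 5) • g) = p - 5 * u := by
    rw [e5]; exact coeff_nsmul_eq hcard hhgen (by omega) (by omega)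
  have e3 : (p - 3) • g = (p - 3 * u) • h := by
    rw [← hgu, ← mul_nsmul]
    refine modsmul _ _ ?_
    apply (ZMod.natCast_eq_natCast_iff _ _ _).mp
    have : ((p - 3 : ℕ) : ZMod p) = -3 := by
      rw [Nat.cast_sub (by omega)]; simp
    push_cast [this, Nat.cast_sub h3u.le]
    rw [ZMod.natCast_self]
    ring
  have c3 : coeff h ((p - 3) • g) = p - 3 * u := by
    rw [e3]; exact coeff_nsmul_eq hcard hhgen (by omega) (by omega)
  -- the norm at h is 1
  have hnorm1 : seqNorm h S = 1 := by
    rw [seqNorm, hcard, hS]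
    simp only [Multiset.insert_eq_cons, Multiset.map_cons, Multiset.map_singleton,
      Multiset.sum_cons, Multiset.sum_singleton, c1, c6, c5, c3]
    have : u + (u + (6 * u - p + (p - 5 * u + (p - 3 * u)))) = p := by omega
    rw [this, div_self (by exact_mod_cast hp0.ne')]
  -- lower bound: every generator has norm ≥ 1
  have hlow : ∀ h' : G, AddSubgroup.zmultiples h' = ⊤ → 1 ≤ seqNorm h' S := by
    intro h' hh'
    have hordh' := order_of_gen hcard hh'
    obtain ⟨q1, q1s⟩ := coeff_pos_smul hcard hp0 hh' g
    obtain ⟨q6, q6s⟩ := coeff_pos_smul hcard hp0 hh' ((6 : ℕ) • g)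
    obtain ⟨q5, q5s⟩ := coeff_pos_smul hcard hp0 hh' ((p - 5) • g)
    obtain ⟨q3, q3s⟩ := coeff_pos_smul hcard hp0 hh' ((p - 3) • g)
    set T : ℕ := (S.map (coeff h')).sum with hT_def
    have hTsum : T = coeff h' g + (coeff h' g + (coeff h' ((6 : ℕ) • g) +
        (coeff h' ((p - 5) • g) + coeff h' ((p - 3) • g)))) := by
      rw [hT_def, hS]
      simp [Multiset.insert_eq_cons]
    have hTsmul : T • h' = 0 := by
      rw [hTsum]
      simp only [add_nsmul, q1s, q6s, q5s, q3s]
      have : S.sum = 0 := hmin.2.1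
      rw [hS] at this
      simpa [Multiset.insert_eq_cons, add_assoc] using this
    have hdvd : p ∣ T := by
      rw [← hordh']
      exact addOrderOf_dvd_of_nsmul_eq_zero hTsmul
    have hTpos : 0 < T := by omega
    have hTge : p ≤ T := Nat.le_of_dvd hTpos hdvd
    rw [seqNorm, hcard, ← hT_def]
    rw [le_div_iff₀ (by exact_mod_cast hp0), one_mul]
    exact_mod_cast hTge
  -- conclude
  have hmem : (1 : ℝ) ∈ ((fun g => seqNorm g S) '' {g : G | AddSubgroup.zmultiples g = ⊤}) :=
    ⟨h, hhgen, hnorm1⟩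
  have hlb : ∀ y ∈ ((fun g => seqNorm g S) '' {g : G | AddSubgroup.zmultiples g = ⊤}),
      (1 : ℝ) ≤ y := by
    rintro y ⟨h', hh', rfl⟩
    exact hlow h' hh'
  rw [seqIndex]
  exact le_antisymm (csInf_le ⟨1, hlb⟩ hmem) (le_csInf ⟨1, hmem⟩ hlb)
end

section
/- There do not exist a prime p ≥ 31, a cyclic group G = ⟨g⟩ of order p, an integer k₁ ≥ 2, and a minimal zero-sum sequence S = g·g·(cg)·((p−b)g)·((p−a)g) over G with a = 3, b = 3k₁ − 2, c = 3k₁ − 1, such that 2 + c = a + b, 2 < a ≤ b < c < p/2, 3 < p/c < p/b < 4, and ⌈(k₁−1)p/c⌉ = ⌈(k₁−1)p/b⌉. -/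
/-- there is no minimal zero-sum sequence in the case
`a = 3, b = 3k₁ - 2, c = 3k₁ - 1` with `k₁ ≥ 2`, `3 < p/c < p/b < 4` and
`⌈(k₁-1)p/c⌉ = ⌈(k₁-1)p/b⌉`. -/
theorem stmt9 (p : ℕ) (hp : p.Prime) (hp31 : 31 ≤ p)
    (G : Type*) [AddCommGroup G] [Fintype G] (hcard : Fintype.card G = p)
    (g : G) (hg : AddSubgroup.zmultiples g = ⊤)
    (k₁ a b c : ℕ) (hk : 2 ≤ k₁)
    (ha : a = 3) (hb : b = 3 * k₁ - 2) (hc : c = 3 * k₁ - 1)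
    (habc : 2 + c = a + b) (ha2 : 2 < a) (hab : a ≤ b) (hbc : b < c)
    (hcp : (c : ℝ) < (p : ℝ) / 2)
    (h1 : (3 : ℝ) < (p : ℝ) / c) (h2 : (p : ℝ) / c < (p : ℝ) / b) (h3 : (p : ℝ) / b < 4)
    (hceil : ⌈((k₁ - 1 : ℕ) : ℝ) * p / c⌉ = ⌈((k₁ - 1 : ℕ) : ℝ) * p / b⌉)
    (S : Multiset G) (hS : S = {g, g, c • g, (p - b) • g, (p - a) • g})
    (hmin : IsMinZeroSum S) :
    False := by
  set m := k₁ - 1 with hm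
  have hb' : b = 3 * m + 1 := by omega
  have hc' : c = 3 * m + 2 := by omega
  have hbpos : (0:ℝ) < (b:ℝ) := by exact_mod_cast (by omega : 0 < b)
  have hcpos : (0:ℝ) < (c:ℝ) := by exact_mod_cast (by omega : 0 < c)
  -- p < 4b
  have hp4b : p < 4 * b := by
    have := (div_lt_iff₀ hbpos).mp h3
    exact_mod_cast this
  -- 3c < p
  have hp3c : 3 * c < p := by
    have := (lt_div_iff₀ hcpos).mp h1
    exact_mod_cast this
  have hm3 : 3 ≤ m := by omega
  set J := ⌈((m : ℕ) : ℝ) * p / c⌉ with hJ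
  have hub : (J:ℝ) < (m:ℝ) * p / c + 1 := Int.ceil_lt_add_one _
  have hlb : ((m:ℕ):ℝ) * p / b ≤ (J:ℝ) := by
    rw [hceil]; exact Int.le_ceil _
  -- c * J < m * p + c  over ℤ
  have A : (c:ℤ) * J ≤ (m:ℤ) * p + c - 1 := by
    have h : (c:ℝ) * J < (m:ℝ) * p + c := by
      calc (c:ℝ) * J < c * ((m:ℝ) * p / c + 1) := by
            exact (mul_lt_mul_iff_right₀ hcpos).mpr hub
        _ = (m:ℝ) * p + c := by field_simp
    have h' : (c:ℤ) * J < (m:ℤ) * p + c := by exact_mod_cast h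
    omega
  have B : (m:ℤ) * p ≤ (b:ℤ) * J := by
    have h : ((m:ℕ):ℝ) * p ≤ (b:ℝ) * J := by
      calc ((m:ℕ):ℝ) * p = b * (((m:ℕ):ℝ) * p / b) := by field_simp
        _ ≤ b * J := (mul_le_mul_iff_right₀ hbpos).mpr hlb
    exact_mod_cast h
  -- combine: c * (m*p) ≤ c*b*J = b*(c*J) ≤ b*(m*p + c - 1)
  have key : (c:ℤ) * ((m:ℤ) * p) ≤ (b:ℤ) * ((m:ℤ) * p + c - 1) := by
    calc (c:ℤ) * ((m:ℤ) * p) ≤ (c:ℤ) * ((b:ℤ) * J) := by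
          exact mul_le_mul_of_nonneg_left B (by exact_mod_cast Nat.zero_le c)
      _ = (b:ℤ) * ((c:ℤ) * J) := by ring
      _ ≤ (b:ℤ) * ((m:ℤ) * p + c - 1) := by
          exact mul_le_mul_of_nonneg_left A (by exact_mod_cast Nat.zero_le b)
  have hb'' : (b:ℤ) = 3 * m + 1 := by exact_mod_cast hb'
  have hc'' : (c:ℤ) = 3 * m + 2 := by exact_mod_cast hc'
  have hp3c' : 3 * (c:ℤ) < p := by exact_mod_cast hp3c
  have hm3' : (3:ℤ) ≤ m := by exact_mod_cast hm3
  rw [hb'', hc''] at key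
  have hMP : (m:ℤ) * (3 * (3*(m:ℤ)+2) + 1) ≤ (m:ℤ) * p :=
    mul_le_mul_of_nonneg_left (by omega) (by positivity)
  nlinarith [key, hMP, hm3']
end

section
/- There do not exist a prime p ≥ 31, a cyclic group G = ⟨g⟩ of order p, an integer k₁ ≥ 5, and a minimal zero-sum sequence S = g·g·(cg)·((p−b)g)·((p−a)g) over G with a = 4, b = 4k₁ − 2, c = 4k₁, such that 2 + c = a + b, 2 < a ≤ b < c < p/2, 2 < p/c < p/b < 3, and ⌈(k₁−1)p/c⌉ = ⌈(k₁−1)p/b⌉. -/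
lemma stmt11_auxA1 (K Q : ℤ) (hK : 5 ≤ K) (h : 9*K ≤ 4*Q+1) :
    (K - 1) * (4 * Q + 1) ≤ (Q - 2) * (4 * K) := by nlinarith
lemma stmt11_auxA2 (K Q : ℤ) (hK : 5 ≤ K) (h : 4*Q+1 < 3*(4*K-2)) :
    (Q - 2) * (4 * K - 2) < (K - 1) * (4 * Q + 1) := by nlinarith
lemma stmt11_auxA3 (K Q : ℤ) (hK : 5 ≤ K) (h : 8*K < 4*Q+1) :
    (K - 1) * (4 * Q + 1) ≤ (Q - 1) * (4 * K) := by nlinarith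
lemma stmt11_auxA4 (K Q : ℤ) (hK : 5 ≤ K) (h : 4*Q+1 < 9*K) :
    (Q - 1) * (4 * K - 2) < (K - 1) * (4 * Q + 1) := by nlinarith
lemma stmt11_auxB1 (K Q : ℤ) (hK : 5 ≤ K) (h : 11*K ≤ 4*Q+3) :
    (K - 1) * (4 * Q + 3) ≤ (Q - 2) * (4 * K) := by nlinarith
lemma stmt11_auxB2 (K Q : ℤ) (hK : 5 ≤ K) (h : 4*Q+3 < 3*(4*K-2)) :
    (Q - 2) * (4 * K - 2) < (K - 1) * (4 * Q + 3) := by nlinarith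
lemma stmt11_auxB3 (K Q : ℤ) (hK : 5 ≤ K) (h : 8*K < 4*Q+3) :
    (K - 1) * (4 * Q + 3) ≤ (Q - 1) * (4 * K) := by nlinarith
lemma stmt11_auxB4 (K Q : ℤ) (hK : 5 ≤ K) (h : 4*Q+3 < 11*K) :
    (Q - 1) * (4 * K - 2) < (K - 1) * (4 * Q + 3) := by nlinarith

/-- there is no minimal zero-sum sequence in the case
`a = 4, b = 4k₁ - 2, c = 4k₁` with `k₁ ≥ 5`, `2 < p/c < p/b < 3` and
`⌈(k₁-1)p/c⌉ = ⌈(k₁-1)p/b⌉`. -/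
theorem stmt11 (p : ℕ) (hp : p.Prime) (hp31 : 31 ≤ p)
    (G : Type*) [AddCommGroup G] [Fintype G] (hcard : Fintype.card G = p)
    (g : G) (hg : AddSubgroup.zmultiples g = ⊤)
    (k₁ a b c : ℕ) (hk : 5 ≤ k₁)
    (ha : a = 4) (hb : b = 4 * k₁ - 2) (hc : c = 4 * k₁)
    (habc : 2 + c = a + b) (ha2 : 2 < a) (hab : a ≤ b) (hbc : b < c)
    (hcp : (c : ℝ) < (p : ℝ) / 2)
    (h1 : (2 : ℝ) < (p : ℝ) / c) (h2 : (p : ℝ) / c < (p : ℝ) / b) (h3 : (p : ℝ) / b < 3)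
    (hceil : ⌈((k₁ - 1 : ℕ) : ℝ) * p / c⌉ = ⌈((k₁ - 1 : ℕ) : ℝ) * p / b⌉)
    (S : Multiset G) (hS : S = {g, g, c • g, (p - b) • g, (p - a) • g})
    (hmin : IsMinZeroSum S) :
    False := by
  -- Everything follows from arithmetic: the ceiling equality is impossible.
  have hbpos : 0 < b := by omega
  have hcpos : 0 < c := by omega
  have hbR : (0:ℝ) < (b:ℝ) := by exact_mod_cast hbpos
  have hcR : (0:ℝ) < (c:ℝ) := by exact_mod_cast hcpos
  have hp2c : 2 * c < p := by
    have := (lt_div_iff₀ hcR).mp h1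
    exact_mod_cast this
  have hp3b : p < 3 * b := by
    have := (div_lt_iff₀ hbR).mp h3
    exact_mod_cast this
  have hpodd : p % 2 = 1 := Nat.odd_iff.mp (hp.odd_of_ne_two (by omega))
  have hkZ : (5 : ℤ) ≤ (k₁ : ℤ) := by exact_mod_cast hk
  obtain ⟨q, hq⟩ : ∃ q, p = 4 * q + 1 ∨ p = 4 * q + 3 := ⟨p / 4, by omega⟩
  -- cast everything to ℤ
  have hmZ : ((k₁ - 1 : ℕ) : ℤ) = (k₁ : ℤ) - 1 := by omega
  have hbZ : ((b : ℕ) : ℤ) = 4 * (k₁ : ℤ) - 2 := by omega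
  have hcZ : ((c : ℕ) : ℤ) = 4 * (k₁ : ℤ) := by omega
  -- find an integer N with m*p ≤ N*c and N*b < m*p
  obtain ⟨N, hN1, hN2⟩ :
      ∃ N : ℤ, ((k₁ - 1 : ℕ) : ℤ) * p ≤ N * c ∧ N * b < ((k₁ - 1 : ℕ) : ℤ) * p := by
    rcases hq with hq | hq
    · have hqZ : (p : ℤ) = 4 * (q : ℤ) + 1 := by exact_mod_cast hq
      by_cases h9 : 9 * k₁ ≤ p
      · have h9' : 9 * (k₁ : ℤ) ≤ 4 * (q : ℤ) + 1 := by omega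
        refine ⟨(q : ℤ) - 2, ?_, ?_⟩
        · rw [hmZ, hcZ, hqZ]; exact stmt11_auxA1 _ _ hkZ h9'
        · rw [hmZ, hbZ, hqZ]
          exact stmt11_auxA2 _ _ hkZ (by omega)
      · refine ⟨(q : ℤ) - 1, ?_, ?_⟩
        · rw [hmZ, hcZ, hqZ]
          exact stmt11_auxA3 _ _ hkZ (by omega)
        · rw [hmZ, hbZ, hqZ]
          exact stmt11_auxA4 _ _ hkZ (by omega)
    · have hqZ : (p : ℤ) = 4 * (q : ℤ) + 3 := by exact_mod_cast hq
      by_cases h11 : 11 * k₁ ≤ p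
      · refine ⟨(q : ℤ) - 2, ?_, ?_⟩
        · rw [hmZ, hcZ, hqZ]
          exact stmt11_auxB1 _ _ hkZ (by omega)
        · rw [hmZ, hbZ, hqZ]
          exact stmt11_auxB2 _ _ hkZ (by omega)
      · refine ⟨(q : ℤ) - 1, ?_, ?_⟩
        · rw [hmZ, hcZ, hqZ]
          exact stmt11_auxB3 _ _ hkZ (by omega)
        · rw [hmZ, hbZ, hqZ]
          exact stmt11_auxB4 _ _ hkZ (by omega)
  -- now derive the contradiction with the ceiling equality
  have hx : ((k₁ - 1 : ℕ) : ℝ) * p / c ≤ (N : ℝ) := by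
    rw [div_le_iff₀ hcR]
    exact_mod_cast hN1
  have hy : (N : ℝ) < ((k₁ - 1 : ℕ) : ℝ) * p / b := by
    rw [lt_div_iff₀ hbR]
    exact_mod_cast hN2
  have h5 : ⌈((k₁ - 1 : ℕ) : ℝ) * p / c⌉ ≤ N := Int.ceil_le.mpr hx
  have h6 : N < ⌈((k₁ - 1 : ℕ) : ℝ) * p / b⌉ := Int.lt_ceil.mpr hy
  omega
end

section
/- There do not exist a prime p ≥ 31, a cyclic group G = ⟨g⟩ of order p, an integer k₁ ≥ 5, and a minimal zero-sum sequence S = g·g·(cg)·((p−b)g)·((p−a)g) over G with a = 4, b = 4k₁ − 3, c = 4k₁ − 1, such that 2 + c = a + b, 2 < a ≤ b < c < p/2, 2 < p/c < p/b < 3, and ⌈(k₁−1)p/c⌉ = ⌈(k₁−1)p/b⌉. -/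
set_option maxHeartbeats 1000000 in
/-- there is no minimal zero-sum sequence in the case
`a = 4, b = 4k₁ - 3, c = 4k₁ - 1` with `k₁ ≥ 5`, `2 < p/c < p/b < 3` and
`⌈(k₁-1)p/c⌉ = ⌈(k₁-1)p/b⌉`. -/
theorem stmt12 (p : ℕ) (hp : p.Prime) (hp31 : 31 ≤ p)
    (G : Type*) [AddCommGroup G] [Fintype G] (hcard : Fintype.card G = p)
    (g : G) (hg : AddSubgroup.zmultiples g = ⊤)
    (k₁ a b c : ℕ) (hk : 5 ≤ k₁)
    (ha : a = 4) (hb : b = 4 * k₁ - 3) (hc : c = 4 * k₁ - 1)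
    (habc : 2 + c = a + b) (ha2 : 2 < a) (hab : a ≤ b) (hbc : b < c)
    (hcp : (c : ℝ) < (p : ℝ) / 2)
    (h1 : (2 : ℝ) < (p : ℝ) / c) (h2 : (p : ℝ) / c < (p : ℝ) / b) (h3 : (p : ℝ) / b < 3)
    (hceil : ⌈((k₁ - 1 : ℕ) : ℝ) * p / c⌉ = ⌈((k₁ - 1 : ℕ) : ℝ) * p / b⌉)
    (S : Multiset G) (hS : S = {g, g, c • g, (p - b) • g, (p - a) • g})
    (hmin : IsMinZeroSum S) :
    False := by
  -- Purely arithmetic contradiction from the ceiling condition.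
  have hk1 : (1 : ℕ) ≤ k₁ := le_trans (by norm_num) hk
  have hK : (5 : ℝ) ≤ (k₁ : ℝ) := by exact_mod_cast hk
  have hbR : (b : ℝ) = 4 * (k₁ : ℝ) - 3 := by
    rw [hb, Nat.cast_sub (by omega : 3 ≤ 4 * k₁)]; push_cast; ring
  have hcR : (c : ℝ) = 4 * (k₁ : ℝ) - 1 := by
    rw [hc, Nat.cast_sub (by omega : 1 ≤ 4 * k₁)]; push_cast; ring
  have htR : ((k₁ - 1 : ℕ) : ℝ) = (k₁ : ℝ) - 1 := by
    rw [Nat.cast_sub hk1]; push_cast; ring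
  have hb0 : (0 : ℝ) < b := by rw [hbR]; nlinarith
  have hc0 : (0 : ℝ) < c := by rw [hcR]; nlinarith
  have ht0 : (0 : ℝ) < ((k₁ - 1 : ℕ) : ℝ) := by rw [htR]; nlinarith
  -- p > 2c, hence p ≥ 2c + 1 (naturals)
  have hp2c : (2 : ℝ) * c < p := by
    have := (lt_div_iff₀ hc0).mp h1; linarith
  have hp2c' : 2 * c + 1 ≤ p := by
    have : 2 * c < p := by exact_mod_cast hp2c
    omega
  have hpR : (2 : ℝ) * c + 1 ≤ (p : ℝ) := by exact_mod_cast hp2c'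
  have h4 : ((k₁ - 1 : ℕ) : ℝ) * p ≤ (⌈((k₁ - 1 : ℕ) : ℝ) * p / b⌉ : ℝ) * b := by
    have := Int.le_ceil (((k₁ - 1 : ℕ) : ℝ) * p / b)
    have := (div_le_iff₀ hb0).mp this; linarith
  have h5 : ((k₁ - 1 : ℕ) : ℝ) * p ≤ (⌈((k₁ - 1 : ℕ) : ℝ) * p / c⌉ : ℝ) * c := by
    have := Int.le_ceil (((k₁ - 1 : ℕ) : ℝ) * p / c)
    have := (div_le_iff₀ hc0).mp this; linarith
  have h6 : (⌈((k₁ - 1 : ℕ) : ℝ) * p / c⌉ : ℝ) * c < ((k₁ - 1 : ℕ) : ℝ) * p + c := by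
    have h := Int.ceil_lt_add_one (((k₁ - 1 : ℕ) : ℝ) * p / c)
    have : (⌈((k₁ - 1 : ℕ) : ℝ) * p / c⌉ : ℝ) * c < (((k₁ - 1 : ℕ) : ℝ) * p / c + 1) * c :=
      mul_lt_mul_of_pos_right h hc0
    have hdc : ((k₁ - 1 : ℕ) : ℝ) * p / c * c = ((k₁ - 1 : ℕ) : ℝ) * p :=
      div_mul_cancel₀ _ (ne_of_gt hc0)
    nlinarith
  rw [hceil] at h5 h6
  generalize hm : ⌈((k₁ - 1 : ℕ) : ℝ) * p / b⌉ = m at h4 h5 h6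
  -- lower bound: m ≥ 2k₁ - 1
  have hml : (2 : ℝ) * (k₁ : ℝ) - 1 ≤ (m : ℝ) := by
    have htp : ((k₁ - 1 : ℕ) : ℝ) * (2 * c + 1) ≤ ((k₁ - 1 : ℕ) : ℝ) * p :=
      mul_le_mul_of_nonneg_left hpR (le_of_lt ht0)
    have hmgt : (2 : ℝ) * (k₁ : ℝ) - 2 < (m : ℝ) := by
      rw [htR] at htp ht0
      nlinarith [h5, hc0]
    have hZ : (2 * (k₁ : ℤ) - 2 : ℤ) < m := by
      have : ((2 * (k₁ : ℤ) - 2 : ℤ) : ℝ) < (m : ℝ) := by push_cast; linarith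
      exact_mod_cast this
    have hZ' : (2 * (k₁ : ℤ) - 1 : ℤ) ≤ m := by omega
    have : ((2 * (k₁ : ℤ) - 1 : ℤ) : ℝ) ≤ (m : ℝ) := by exact_mod_cast hZ'
    push_cast at this; linarith
  -- upper bound: m ≤ 2k₁ - 1
  have hmu : (m : ℝ) ≤ 2 * (k₁ : ℝ) - 1 := by
    have h2m : 2 * (m : ℝ) < (c : ℝ) := by nlinarith [h4, h6, hbR, hcR]
    have hcz : ((c : ℕ) : ℤ) = 4 * (k₁ : ℤ) - 1 := by
      rw [hc, Nat.cast_sub (by omega : 1 ≤ 4 * k₁)]; push_cast; ring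
    have hZ : 2 * m < ((c : ℕ) : ℤ) := by exact_mod_cast h2m
    have hZ' : m ≤ 2 * (k₁ : ℤ) - 1 := by omega
    have : (m : ℝ) ≤ ((2 * (k₁ : ℤ) - 1 : ℤ) : ℝ) := by exact_mod_cast hZ'
    push_cast at this; linarith
  -- final contradiction
  have hmeq : (m : ℝ) = 2 * (k₁ : ℝ) - 1 := le_antisymm hmu hml
  have htp : ((k₁ - 1 : ℕ) : ℝ) * (2 * c + 1) ≤ ((k₁ - 1 : ℕ) : ℝ) * p :=
    mul_le_mul_of_nonneg_left hpR (le_of_lt ht0)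
  rw [htR] at htp h4
  rw [hmeq, hbR] at h4
  rw [hcR] at htp
  nlinarith [htp, h4, hK]
end

section
/- Let p be a prime and let a, b, c be integers with 2 + c = a + b and 2 < a ≤ b < c < p/2. Then there exists an integer k with 1 ≤ k ≤ b such that ⌈(k−1)p/c⌉ = ⌈(k−1)p/b⌉ and there exists an integer m with kp/c ≤ m < kp/b. -/
/-- for a prime `p` and integers `a, b, c` with `2 + c = a + b` and
`2 < a ≤ b < c < p/2`, there is `k` with `1 ≤ k ≤ b`, `⌈(k-1)p/c⌉ = ⌈(k-1)p/b⌉` and an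
integer `m` with `kp/c ≤ m < kp/b`. -/
theorem stmt16 (p : ℕ) (hp : p.Prime) (a b c : ℕ)
    (habc : 2 + c = a + b) (ha2 : 2 < a) (hab : a ≤ b) (hbc : b < c)
    (hcp : (c : ℝ) < (p : ℝ) / 2) :
    ∃ k : ℕ, 1 ≤ k ∧ k ≤ b ∧
      ⌈((k - 1 : ℕ) : ℝ) * p / c⌉ = ⌈((k - 1 : ℕ) : ℝ) * p / b⌉ ∧
      ∃ m : ℤ, (k : ℝ) * p / c ≤ (m : ℝ) ∧ (m : ℝ) < (k : ℝ) * p / b := by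
  have hb0 : 0 < b := by omega
  have hc0 : 0 < c := by omega
  have hbR : (0:ℝ) < b := by exact_mod_cast hb0
  have hcR : (0:ℝ) < c := by exact_mod_cast hc0
  have hbcR : (b:ℝ) + 1 ≤ c := by exact_mod_cast hbc
  have hpc : (c:ℝ) < p := by linarith
  have hpR : (0:ℝ) < p := by linarith
  have hex : ∃ k : ℕ, 1 ≤ k ∧ k ≤ b ∧
      ∃ m : ℤ, (k:ℝ) * p / c ≤ (m:ℝ) ∧ (m:ℝ) < (k:ℝ) * p / b := by
    refine ⟨b, hb0, le_refl b, ⟨(p:ℤ) - 1, ?_, ?_⟩⟩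
    · rw [div_le_iff₀ hcR]
      push_cast
      nlinarith
    · rw [lt_div_iff₀ hbR]
      push_cast
      nlinarith
  classical
  refine ⟨Nat.find hex, (Nat.find_spec hex).1, (Nat.find_spec hex).2.1, ?_, (Nat.find_spec hex).2.2⟩
  set k := Nat.find hex with hk
  rcases eq_or_lt_of_le (Nat.find_spec hex).1 with h1 | h1
  · rw [hk, ← h1]
    norm_num
  · -- k ≥ 2, so k-1 ≥ 1 and ¬P (k-1)
    have hkb : k ≤ b := (Nat.find_spec hex).2.1
    have hmin := Nat.find_min hex (show k - 1 < k by omega)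
    push_neg at hmin
    have hnom := hmin (by omega) (by omega)
    set N : ℝ := ((k - 1 : ℕ) : ℝ) * p with hN
    have hN0 : 0 ≤ N := by positivity
    have hxy : N / c ≤ N / b := by
      apply div_le_div_of_nonneg_left hN0 hbR
      linarith
    have hle : ⌈N / c⌉ ≤ ⌈N / b⌉ := Int.ceil_le_ceil hxy
    rcases eq_or_lt_of_le hle with h | h
    · exact h
    · exfalso
      have h4 := hnom ⌈N / c⌉ (Int.le_ceil _)
      have h2 : (⌈N / c⌉ : ℝ) ≤ (⌈N / b⌉ : ℝ) - 1 := by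
        have : ⌈N / c⌉ + 1 ≤ ⌈N / b⌉ := h
        have := (Int.cast_le (R := ℝ)).2 this
        push_cast at this
        linarith
      have h3 : ((⌈N / b⌉ : ℝ)) - 1 < N / b := by
        have := Int.ceil_lt_add_one (N / b)
        linarith
      have h5 : ((⌈N / c⌉ : ℝ)) < N / b := by linarith
      linarith
end

section
/- Let G be a finite cyclic group of order n ≥ 2 and let S be a minimal zero-sum sequence over G of length 5. Then 1 ≤ ind(S) ≤ 2. -/
section Aux

variable {G : Type*} [AddCommGroup G] [Fintype G]

lemma aux_exists_coeff {n : ℕ} (hn : 0 < n) (hcard : Fintype.card G = n)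
    {g : G} (hg : AddSubgroup.zmultiples g = ⊤) (x : G) :
    ∃ k : ℕ, (0 < k ∧ k • g = x) ∧ k ≤ n := by
  have hx : x ∈ AddSubgroup.zmultiples g := hg ▸ AddSubgroup.mem_top x
  obtain ⟨m, hm⟩ := AddSubgroup.mem_zmultiples_iff.mp hx
  have hng' : n • g = 0 := by
    have h0 : (Fintype.card G) • g = 0 := card_nsmul_eq_zero
    rwa [hcard] at h0
  have hng : (n : ℤ) • g = 0 := by rw [natCast_zsmul]; exact hng'
  have hnz : (n : ℤ) ≠ 0 := by exact_mod_cast hn.ne'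
  set r : ℤ := m % (n : ℤ) with hr
  have hr0 : 0 ≤ r := Int.emod_nonneg m hnz
  have hrlt : r < (n : ℤ) := Int.emod_lt_of_pos m (by exact_mod_cast hn)
  have hsub : m - r = (m / n) * (n : ℤ) := by rw [hr, Int.emod_def]; ring
  have h1 : (m - r) • g = 0 := by rw [hsub, mul_smul, hng, smul_zero]
  have hrg : r • g = x := by
    calc r • g = (m - r) • g + r • g := by rw [h1, zero_add]
    _ = m • g := by rw [← add_zsmul, sub_add_cancel]
    _ = x := hm
  by_cases h0 : r = 0
  · refine ⟨n, ⟨hn, ?_⟩, le_refl n⟩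
    have hx0 : x = 0 := by rw [← hrg, h0, zero_zsmul]
    rw [hx0]; exact hng'
  · exact ⟨r.toNat, ⟨by omega, by rw [← hrg, ← natCast_zsmul, Int.toNat_of_nonneg hr0]⟩, by omega⟩

lemma aux_coeff_spec_s18 {n : ℕ} (hn : 0 < n) (hcard : Fintype.card G = n)
    {g : G} (hg : AddSubgroup.zmultiples g = ⊤) (x : G) :
    0 < coeff g x ∧ coeff g x ≤ n ∧ coeff g x • g = x := by
  classical
  obtain ⟨k, hk, hkn⟩ := aux_exists_coeff hn hcard hg x
  have h : ∃ k : ℕ, 0 < k ∧ k • g = x := ⟨k, hk⟩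
  have hco : coeff g x = Nat.find h := by rw [coeff, dif_pos h]
  have hspec := Nat.find_spec h
  have hle : Nat.find h ≤ k := Nat.find_min' h hk
  exact ⟨hco ▸ hspec.1, hco ▸ le_trans hle hkn, hco ▸ hspec.2⟩

lemma aux_smul_inj {n : ℕ} {g : G} (hord : addOrderOf g = n)
    {a b : ℕ} (ha : a < n) (hb : b < n) (hab : a • g = b • g) : a = b := by
  rcases le_total a b with h | h
  · have h0 : (b - a) • g = 0 := by rw [sub_nsmul g h, hab]; simp
    have hdvd : n ∣ b - a := hord ▸ addOrderOf_dvd_of_nsmul_eq_zero h0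
    rcases Nat.eq_zero_or_pos (b - a) with h1 | h1
    · omega
    · have := Nat.le_of_dvd h1 hdvd; omega
  · have h0 : (a - b) • g = 0 := by rw [sub_nsmul g h, hab]; simp
    have hdvd : n ∣ a - b := hord ▸ addOrderOf_dvd_of_nsmul_eq_zero h0
    rcases Nat.eq_zero_or_pos (a - b) with h1 | h1
    · omega
    · have := Nat.le_of_dvd h1 hdvd; omega

omit [Fintype G] in
lemma aux_zmultiples_neg {g : G} (hg : AddSubgroup.zmultiples g = ⊤) :
    AddSubgroup.zmultiples (-g) = ⊤ := by
  rw [eq_top_iff]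
  intro x _
  have hx : x ∈ AddSubgroup.zmultiples g := hg ▸ AddSubgroup.mem_top x
  obtain ⟨m, hm⟩ := AddSubgroup.mem_zmultiples_iff.mp hx
  exact AddSubgroup.mem_zmultiples_iff.mpr ⟨-m, by rw [smul_neg, neg_zsmul, neg_neg]; exact hm⟩

lemma aux_addOrderOf {n : ℕ} (hcard : Fintype.card G = n)
    {g : G} (hg : AddSubgroup.zmultiples g = ⊤) : addOrderOf g = n := by
  have := addOrderOf_eq_card_of_forall_mem_zmultiples
    (g := g) (fun y => hg ▸ AddSubgroup.mem_top y)
  rwa [Nat.card_eq_fintype_card, hcard] at this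

lemma aux_coeff_neg {n : ℕ} (hn : 0 < n) (hcard : Fintype.card G = n)
    {g : G} (hg : AddSubgroup.zmultiples g = ⊤) {x : G} (hx : x ≠ 0) :
    coeff (-g) x = n - coeff g x ∧ coeff g x < n := by
  have hord : addOrderOf g = n := aux_addOrderOf hcard hg
  have hordn : addOrderOf (-g) = n := by
    rw [← hord]; exact addOrderOf_neg g
  obtain ⟨hc1, hc2, hc3⟩ := aux_coeff_spec_s18 hn hcard hg x
  obtain ⟨hd1, hd2, hd3⟩ := aux_coeff_spec_s18 hn hcard (aux_zmultiples_neg hg) x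
  set c := coeff g x
  set d := coeff (-g) x
  have hcn : c < n := by
    rcases lt_or_eq_of_le hc2 with h | h
    · exact h
    · exfalso; apply hx
      rw [← hc3, h, ← hord, addOrderOf_nsmul_eq_zero]
  have hdn : d < n := by
    rcases lt_or_eq_of_le hd2 with h | h
    · exact h
    · exfalso; apply hx
      rw [← hd3, h, ← hordn, addOrderOf_nsmul_eq_zero]
  have key : (n - c) • (-g) = x := by
    have h1 : (n - c) • g = -x := by
      have h2 : c • g + (n - c) • g = 0 := by
        rw [← add_nsmul, Nat.add_sub_cancel' hc2, ← hord, addOrderOf_nsmul_eq_zero]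
      rw [hc3] at h2
      exact eq_neg_of_add_eq_zero_right h2
    calc (n - c) • (-g) = -((n - c) • g) := by
          rw [← neg_nsmul]
    _ = x := by rw [h1, neg_neg]
  refine ⟨aux_smul_inj hordn hdn (by omega) (by rw [hd3, key]), hcn⟩

omit [Fintype G] in
lemma aux_sum_coeff_smul (g : G) (h : ∀ x : G, coeff g x • g = x) (S : Multiset G) :
    (S.map (coeff g)).sum • g = S.sum := by
  induction S using Multiset.induction with
  | empty => simp
  | cons a s ih => simp [add_nsmul, ih, h]

end Aux

section Main

variable {G : Type*} [AddCommGroup G] [Fintype G]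

/-- For a generator `g` and a zero-sum sequence with no zero element, the coefficient sum
is a positive multiple of `n`. -/
lemma aux_norm_mul {n : ℕ} (hn : 0 < n) (hcard : Fintype.card G = n)
    {g : G} (hg : AddSubgroup.zmultiples g = ⊤) {S : Multiset G}
    (hS : S ≠ 0) (hsum : S.sum = 0) :
    ∃ a : ℕ, 1 ≤ a ∧ (S.map (coeff g)).sum = a * n := by
  have hA : ((S.map (coeff g)).sum) • g = 0 := by
    rw [aux_sum_coeff_smul g (fun x => (aux_coeff_spec_s18 hn hcard hg x).2.2) S, hsum]
  have hdvd : n ∣ (S.map (coeff g)).sum :=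
    (aux_addOrderOf hcard hg) ▸ addOrderOf_dvd_of_nsmul_eq_zero hA
  obtain ⟨x, hx⟩ := Multiset.exists_mem_of_ne_zero hS
  have hmem : coeff g x ∈ S.map (coeff g) := Multiset.mem_map_of_mem _ hx
  have hpos : 0 < (S.map (coeff g)).sum :=
    lt_of_lt_of_le (aux_coeff_spec_s18 hn hcard hg x).1
      (Multiset.single_le_sum (fun y _ => Nat.zero_le y) _ hmem)
  obtain ⟨a, ha⟩ := hdvd
  refine ⟨a, ?_, by rw [ha, mul_comm]⟩
  by_contra h
  interval_cases a <;> omega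

lemma aux_pair_sum {n : ℕ} (hn : 0 < n) (hcard : Fintype.card G = n)
    {g : G} (hg : AddSubgroup.zmultiples g = ⊤) {S : Multiset G}
    (h0S : (0 : G) ∉ S) :
    (S.map (coeff g)).sum + (S.map (coeff (-g))).sum = Multiset.card S * n := by
  have hmapeq : S.map (fun x => coeff g x + coeff (-g) x) = S.map (fun _ => n) := by
    apply Multiset.map_congr rfl
    intro x hxS
    have hx0 : x ≠ 0 := fun h => h0S (h ▸ hxS)
    obtain ⟨heq, hlt⟩ := aux_coeff_neg hn hcard hg hx0
    rw [heq]; omega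
  calc (S.map (coeff g)).sum + (S.map (coeff (-g))).sum
      = (S.map (fun x => coeff g x + coeff (-g) x)).sum := by
        rw [Multiset.sum_map_add]
    _ = (S.map (fun _ => n)).sum := by rw [hmapeq]
    _ = Multiset.card S * n := by
        rw [Multiset.map_const', Multiset.sum_replicate, smul_eq_mul]

end Main

/-- for a finite cyclic group of order `n ≥ 2`, every minimal zero-sum
sequence of length 5 satisfies `1 ≤ ind(S) ≤ 2`. -/
theorem stmt18 (n : ℕ) (hn : 2 ≤ n)
    (G : Type*) [AddCommGroup G] [Fintype G]
    (hcyc : IsAddCyclic G) (hcard : Fintype.card G = n)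
    (S : Multiset G) (hlen : Multiset.card S = 5) (hmin : IsMinZeroSum S) :
    1 ≤ seqIndex S ∧ seqIndex S ≤ 2 := by
  have hn0 : 0 < n := by omega
  obtain ⟨g, hgen⟩ := hcyc.exists_generator
  have hg : AddSubgroup.zmultiples g = ⊤ := by
    rw [eq_top_iff]; exact fun x _ => hgen x
  have hS0 : S ≠ 0 := hmin.1
  have hsum : S.sum = 0 := hmin.2.1
  have h0S : (0 : G) ∉ S := by
    intro h
    refine hmin.2.2 {0} (Multiset.singleton_le.mpr h) (by simp) ?_ (by simp)
    intro he
    rw [← he] at hlen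
    simp at hlen
  -- every generator has integer norm ≥ 1
  have hnorm : ∀ h : G, AddSubgroup.zmultiples h = ⊤ →
      ∃ a : ℕ, 1 ≤ a ∧ (S.map (coeff h)).sum = a * n ∧ seqNorm h S = a := by
    intro h hh
    obtain ⟨a, ha1, ha2⟩ := aux_norm_mul hn0 hcard hh hS0 hsum
    refine ⟨a, ha1, ha2, ?_⟩
    rw [seqNorm, hcard, ha2]
    push_cast
    field_simp
  -- lower bound
  have hbdd : ∀ y ∈ (fun g => seqNorm g S) '' {g : G | AddSubgroup.zmultiples g = ⊤},
      (1 : ℝ) ≤ y := by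
    rintro y ⟨h, hh, rfl⟩
    show (1 : ℝ) ≤ seqNorm h S
    obtain ⟨a, ha1, _, ha3⟩ := hnorm h hh
    rw [ha3]
    exact_mod_cast ha1
  have hne : ((fun g => seqNorm g S) '' {g : G | AddSubgroup.zmultiples g = ⊤}).Nonempty :=
    ⟨seqNorm g S, g, hg, rfl⟩
  have hBdd : BddBelow ((fun g => seqNorm g S) '' {g : G | AddSubgroup.zmultiples g = ⊤}) :=
    ⟨1, hbdd⟩
  constructor
  · exact le_csInf hne hbdd
  · -- one of g, -g has norm ≤ 2
    have hgneg : AddSubgroup.zmultiples (-g) = ⊤ := aux_zmultiples_neg hg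
    obtain ⟨a, ha1, ha2, ha3⟩ := hnorm g hg
    obtain ⟨b, hb1, hb2, hb3⟩ := hnorm (-g) hgneg
    have hpair := aux_pair_sum hn0 hcard hg h0S
    rw [ha2, hb2, hlen] at hpair
    have hab : a + b = 5 := by
      have h5 : (a + b) * n = 5 * n := by rw [add_mul]; omega
      exact Nat.eq_of_mul_eq_mul_right hn0 h5
    rcases le_or_gt a 2 with h2 | h2
    · have hmem : seqNorm g S ∈
          (fun g => seqNorm g S) '' {g : G | AddSubgroup.zmultiples g = ⊤} := ⟨g, hg, rfl⟩
      refine le_trans (csInf_le hBdd hmem) ?_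
      rw [ha3]
      exact_mod_cast h2
    · have hb2' : b ≤ 2 := by omega
      have hmem : seqNorm (-g) S ∈
          (fun g => seqNorm g S) '' {g : G | AddSubgroup.zmultiples g = ⊤} :=
        ⟨-g, hgneg, rfl⟩
      refine le_trans (csInf_le hBdd hmem) ?_
      rw [hb3]
      exact_mod_cast hb2'
end
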